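/- arXiv:2512.09674 — 12 statements merged into one kernel-verified Lean document; each statement's English description precedes it below -/
import Mathlib

section
/- Let n ≥ 4 be even. The induced (n-1)-independent graph H_{n-1}(CL_n) of the circular ladder graph CL_n is isomorphic (as a simple graph) to the complete bipartite graph K_{n,n}. -/
/-- A finite set of vertices is independent if no two of its elements are adjacent. -/
def IsIndep {V : Type*} (G : SimpleGraph V) (S : Finset V) : Prop :=
  ∀ v ∈ S, ∀ w ∈ S, ¬ G.Adj v w

/-- The induced `k`-independent graph of `G`: vertices are the independent sets of
size `k` in `G`, two of them adjacent iff they are disjoint. -/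
def Hk {V : Type*} (G : SimpleGraph V) (k : ℕ) :
    SimpleGraph {S : Finset V // S.card = k ∧ IsIndep G S} :=
  SimpleGraph.fromRel (fun S T => Disjoint S.1 T.1)

/-- The circular ladder graph `CL n` on `ZMod n × Bool`: `(i,b)` and `(j,c)` are adjacent
iff either `b = c` and (`j = i + 1` or `j = i - 1`), or `i = j` and `b ≠ c`. -/
def CL (n : ℕ) : SimpleGraph (ZMod n × Bool) :=
  SimpleGraph.fromRel (fun v w =>
    (v.2 = w.2 ∧ (w.1 = v.1 + 1 ∨ w.1 = v.1 - 1)) ∨ (v.1 = w.1 ∧ v.2 ≠ w.2))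

section Aux

variable {n : ℕ} (h2 : 2 ∣ n) [NeZero n]

/-- parity of an element of `ZMod n` (requires `2 ∣ n` to be well defined). -/
def bpar (i : ZMod n) : Bool := decide ((ZMod.castHom h2 (ZMod 2)) i = 1)

lemma bflip (i : ZMod n) : bpar h2 (i + 1) = !bpar h2 i := by
  have key : ∀ x : ZMod 2, decide (x + 1 = 1) = !decide (x = 1) := by decide
  unfold bpar
  rw [map_add, map_one]
  exact key _

/-- the two maximum independent sets of `CL n`. -/
def AbS (s : Bool) : Finset (ZMod n × Bool) :=
  Finset.univ.image (fun i : ZMod n => (i, xor s (bpar h2 i)))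

lemma mem_AbS {s : Bool} {v : ZMod n × Bool} :
    v ∈ AbS h2 s ↔ v.2 = xor s (bpar h2 v.1) := by
  obtain ⟨a, b⟩ := v
  simp only [AbS, Finset.mem_image, Finset.mem_univ, true_and, Prod.mk.injEq]
  constructor
  · rintro ⟨j, hj1, hj2⟩
    rw [← hj1, hj2]
  · intro hv
    exact ⟨a, rfl, hv.symm⟩

lemma card_AbS (s : Bool) : (AbS h2 s).card = n := by
  rw [AbS, Finset.card_image_of_injective _ (fun a b h => congrArg Prod.fst h),
    Finset.card_univ, ZMod.card]

lemma indep_AbS (s : Bool) : IsIndep (CL n) (AbS h2 s) := by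
  have bx : ∀ (s b : Bool), xor s b ≠ xor s !b := by decide
  intro v hv w hw hadj
  rw [mem_AbS] at hv hw
  rw [CL, SimpleGraph.fromRel_adj] at hadj
  obtain ⟨hne, hrel⟩ := hadj
  have key : ∀ a b : ZMod n × Bool, a.2 = xor s (bpar h2 a.1) →
      b.2 = xor s (bpar h2 b.1) →
      ¬((a.2 = b.2 ∧ (b.1 = a.1 + 1 ∨ b.1 = a.1 - 1)) ∨ (a.1 = b.1 ∧ a.2 ≠ b.2)) := by
    rintro a b ha hb (⟨heq, h1 | h1⟩ | ⟨h1, h2⟩)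
    · rw [ha, hb, h1, bflip] at heq
      exact bx s _ heq
    · have h1' : a.1 = b.1 + 1 := by rw [h1]; ring
      rw [ha, hb, h1', bflip] at heq
      exact bx s _ heq.symm
    · rw [ha, hb, h1] at h2
      exact h2 rfl
  rcases hrel with h | h
  · exact key v w hv hw h
  · exact key w v hw hv h

lemma isIndep_subset {V : Type*} {G : SimpleGraph V} {S T : Finset V}
    (h : S ⊆ T) (hT : IsIndep G T) : IsIndep G S :=
  fun v hv w hw => hT v (h hv) w (h hw)

lemma classify (hn : 4 ≤ n) (S : Finset (ZMod n × Bool))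
    (hcard : S.card = n - 1) (hind : IsIndep (CL n) S) :
    ∃ s i₀, S = (AbS h2 s).erase (i₀, xor s (bpar h2 i₀)) := by
  haveI : Fact (1 < n) := ⟨by omega⟩
  have hone : (1 : ZMod n) ≠ 0 := one_ne_zero
  -- first coordinate is injective on S
  have hinj : Set.InjOn Prod.fst (S : Set (ZMod n × Bool)) := by
    intro v hv w hw h
    by_contra hne
    have hsnd : v.2 ≠ w.2 := fun h2' => hne (Prod.ext_iff.mpr ⟨h, h2'⟩)
    have : (CL n).Adj v w := by
      rw [CL, SimpleGraph.fromRel_adj]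
      exact ⟨hne, Or.inl (Or.inr ⟨h, hsnd⟩)⟩
    exact hind v hv w hw this
  set T : Finset (ZMod n) := S.image Prod.fst with hT
  have hTcard : T.card = n - 1 := by
    rw [hT, Finset.card_image_of_injOn hinj, hcard]
  have hTc : Tᶜ.card = 1 := by
    rw [Finset.card_compl, hTcard, ZMod.card]
    omega
  obtain ⟨i₀, hi₀⟩ := Finset.card_eq_one.mp hTc
  have hocc : ∀ i : ZMod n, i ≠ i₀ → ∃ c, (i, c) ∈ S := by
    intro i hi
    have : i ∈ T := by
      by_contra h
      have : i ∈ Tᶜ := Finset.mem_compl.mpr h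
      rw [hi₀, Finset.mem_singleton] at this
      exact hi this
    obtain ⟨⟨a, b⟩, hv, hv2⟩ := Finset.mem_image.mp this
    cases hv2
    exact ⟨b, hv⟩
  have hi₀notin : ∀ c, (i₀, c) ∉ S := by
    intro c hc
    have : i₀ ∈ T := Finset.mem_image.mpr ⟨(i₀, c), hc, rfl⟩
    have h2' : i₀ ∈ Tᶜ := by rw [hi₀]; exact Finset.mem_singleton_self _
    exact Finset.mem_compl.mp h2' this
  have hstep : ∀ (i : ZMod n) (c c' : Bool), (i, c) ∈ S → (i + 1, c') ∈ S → c' = !c := by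
    intro i c c' h1 h2'
    by_contra hcc
    have hcc' : c' = c := by revert hcc; cases c <;> cases c' <;> simp
    subst hcc'
    have hadj : (CL n).Adj (i, c') (i + 1, c') := by
      rw [CL, SimpleGraph.fromRel_adj]
      refine ⟨?_, Or.inl (Or.inl ⟨rfl, Or.inl rfl⟩)⟩
      intro h
      have : i = i + 1 := congrArg Prod.fst h
      rw [left_eq_add] at this
      exact hone this
    exact hind _ h1 _ h2' hadj
  obtain ⟨c₁, hc₁⟩ := hocc (i₀ + 1) (by simp [hone])
  set s : Bool := xor c₁ (bpar h2 (i₀ + 1)) with hs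
  have hcast_ne : ∀ k : ℕ, 1 ≤ k → k ≤ n - 1 → ((k : ZMod n) ≠ 0) := by
    intro k h1 h2'
    rw [Ne, ZMod.natCast_eq_zero_iff]
    intro hdvd
    have := Nat.le_of_dvd (by omega) hdvd
    omega
  have main : ∀ k : ℕ, 1 ≤ k → k ≤ n - 1 →
      (i₀ + (k : ZMod n), xor s (bpar h2 (i₀ + (k : ZMod n)))) ∈ S := by
    intro k
    induction k with
    | zero => omega
    | succ m ih =>
      intro _ hm1
      rcases Nat.eq_zero_or_pos m with hm0 | hmpos
      · subst hm0
        have h1 : ((0 + 1 : ℕ) : ZMod n) = 1 := by norm_num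
        rw [h1]
        have hb : xor s (bpar h2 (i₀ + 1)) = c₁ := by
          rw [hs]; cases c₁ <;> cases bpar h2 (i₀ + 1) <;> rfl
        rw [hb]
        exact hc₁
      · have ihm := ih hmpos (by omega)
        have hcol : i₀ + ((m + 1 : ℕ) : ZMod n) = (i₀ + (m : ℕ)) + 1 := by
          push_cast; ring
        have hne : i₀ + ((m + 1 : ℕ) : ZMod n) ≠ i₀ := by
          intro h
          have : ((m + 1 : ℕ) : ZMod n) = 0 := by
            have := h
            rwa [add_eq_left] at this
          exact hcast_ne (m + 1) (by omega) (by omega) this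
        obtain ⟨c', hc'⟩ := hocc _ hne
        have hc'' : c' = !(xor s (bpar h2 (i₀ + (m : ℕ)))) := by
          apply hstep (i₀ + (m : ℕ)) _ _ ihm
          rwa [hcol] at hc'
        have hbp : bpar h2 (i₀ + ((m + 1 : ℕ) : ZMod n)) = !bpar h2 (i₀ + (m : ℕ)) := by
          rw [hcol, bflip]
        have : xor s (bpar h2 (i₀ + ((m + 1 : ℕ) : ZMod n))) = c' := by
          rw [hbp, hc'']
          cases s <;> cases bpar h2 (i₀ + (m : ℕ)) <;> rfl
        rw [this]
        exact hc'
  refine ⟨s, i₀, ?_⟩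
  have hsub : S ⊆ (AbS h2 s).erase (i₀, xor s (bpar h2 i₀)) := by
    rintro ⟨i, c⟩ hm
    have hine : i ≠ i₀ := by
      intro h; subst h; exact hi₀notin c hm
    set k : ℕ := (i - i₀).val with hk
    have hk1 : 1 ≤ k := by
      rw [hk]
      rcases Nat.eq_zero_or_pos (i - i₀).val with h | h
      · exfalso
        have : i - i₀ = 0 := (ZMod.val_eq_zero _).mp h
        exact hine (by rwa [sub_eq_zero] at this)
      · exact h
    have hk2 : k ≤ n - 1 := by
      have := ZMod.val_lt (i - i₀)
      omega
    have hkeq : i₀ + (k : ZMod n) = i := by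
      rw [hk, ZMod.natCast_zmod_val]
      ring
    have hmem := main k hk1 hk2
    rw [hkeq] at hmem
    have hceq : c = xor s (bpar h2 i) :=
      congrArg Prod.snd (hinj hm hmem rfl)
    rw [Finset.mem_erase]
    constructor
    · intro h
      exact hine (congrArg Prod.fst h)
    · rw [mem_AbS]; exact hceq
  apply Finset.eq_of_subset_of_card_le hsub
  rw [Finset.card_erase_of_mem ((mem_AbS h2).mpr rfl), card_AbS, hcard]

end Aux

/-- For even `n ≥ 4`, the induced `(n-1)`-independent graph of the circular ladder
graph `CL n` is isomorphic to the complete bipartite graph `K_{n,n}`. -/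
theorem stmt_1 (n : ℕ) (hn : 4 ≤ n) (heven : Even n) :
    Nonempty (Hk (CL n) (n - 1) ≃g completeBipartiteGraph (Fin n) (Fin n)) := by
  haveI : NeZero n := ⟨by omega⟩
  have h2 : 2 ∣ n := heven.two_dvd
  -- set up the vertices
  set V := {S : Finset (ZMod n × Bool) // S.card = n - 1 ∧ IsIndep (CL n) S} with hV
  have hFcard : ∀ (s : Bool) (i : ZMod n),
      ((AbS h2 s).erase (i, xor s (bpar h2 i))).card = n - 1 := by
    intro s i
    rw [Finset.card_erase_of_mem ((mem_AbS h2).mpr rfl), card_AbS]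
  have hFindep : ∀ (s : Bool) (i : ZMod n),
      IsIndep (CL n) ((AbS h2 s).erase (i, xor s (bpar h2 i))) :=
    fun s i => isIndep_subset (Finset.erase_subset _ _) (indep_AbS h2 s)
  -- the vertex map
  let F : Bool → ZMod n → V := fun s i =>
    ⟨(AbS h2 s).erase (i, xor s (bpar h2 i)), hFcard s i, hFindep s i⟩
  let e : Fin n ⊕ Fin n → V := Sum.elim (fun i => F false ((i : ℕ) : ZMod n))
    (fun i => F true ((i : ℕ) : ZMod n))
  -- disjointness of the two sides
  have hAbdisj : Disjoint (AbS h2 false) (AbS h2 true) := by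
    rw [Finset.disjoint_left]
    intro v hv hv'
    rw [mem_AbS] at hv hv'
    rw [hv] at hv'
    revert hv'
    cases bpar h2 v.1 <;> simp
  have hdisjF : ∀ i j, Disjoint (F false i).1 (F true j).1 := by
    intro i j
    exact Finset.disjoint_of_subset_left (Finset.erase_subset _ _)
      (Finset.disjoint_of_subset_right (Finset.erase_subset _ _) hAbdisj)
  have hnonempty : ∀ (s : Bool) (i : ZMod n), (F s i).1.Nonempty := by
    intro s i
    rw [← Finset.card_pos]
    show 0 < ((AbS h2 s).erase _).card
    rw [hFcard]
    omega
  -- same-side sets are never disjoint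
  have hnotdisj : ∀ (s : Bool) (i j : ZMod n), ¬ Disjoint (F s i).1 (F s j).1 := by
    intro s i j hd
    have hsub : (AbS h2 s) \ {(i, xor s (bpar h2 i)), (j, xor s (bpar h2 j))} ⊆
        (F s i).1 ∩ (F s j).1 := by
      intro v hv
      rw [Finset.mem_sdiff, Finset.mem_insert, Finset.mem_singleton] at hv
      push_neg at hv
      obtain ⟨hv1, hv2, hv3⟩ := hv
      exact Finset.mem_inter.mpr ⟨Finset.mem_erase.mpr ⟨hv2, hv1⟩,
        Finset.mem_erase.mpr ⟨hv3, hv1⟩⟩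
    have hcard : 0 < ((AbS h2 s) \ {(i, xor s (bpar h2 i)), (j, xor s (bpar h2 j))}).card := by
      have h1 : ({(i, xor s (bpar h2 i)), (j, xor s (bpar h2 j))} :
          Finset (ZMod n × Bool)).card ≤ 2 := Finset.card_insert_le _ _ |>.trans (by simp)
      have h2' := Finset.le_card_sdiff
        ({(i, xor s (bpar h2 i)), (j, xor s (bpar h2 j))} : Finset (ZMod n × Bool)) (AbS h2 s)
      rw [card_AbS] at h2'
      omega
    obtain ⟨v, hv⟩ := Finset.card_pos.mp hcard
    have := hsub hv
    rw [Finset.mem_inter] at this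
    exact Finset.disjoint_left.mp hd this.1 this.2
  -- injectivity of (s, i) ↦ F s i within a side
  have hFinj : ∀ (s : Bool) (i j : ZMod n), F s i = F s j → i = j := by
    intro s i j h
    have h' : (F s i).1 = (F s j).1 := congrArg Subtype.val h
    by_contra hij
    have hne : (i, xor s (bpar h2 i)) ≠ (j, xor s (bpar h2 j)) := by
      intro hh; exact hij (congrArg Prod.fst hh)
    have hmem : (i, xor s (bpar h2 i)) ∈ (F s j).1 := by
      apply Finset.mem_erase.mpr
      exact ⟨hne, by rw [mem_AbS]⟩
    rw [← h'] at hmem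
    exact (Finset.notMem_erase _ _) hmem
  -- cast injectivity Fin n → ZMod n
  have hcastinj : ∀ i j : Fin n, ((i : ℕ) : ZMod n) = ((j : ℕ) : ZMod n) → i = j := by
    intro i j h
    have hi := ZMod.val_cast_of_lt i.isLt
    have hj := ZMod.val_cast_of_lt j.isLt
    have : (i : ℕ) = (j : ℕ) := by rw [← hi, ← hj, h]
    exact Fin.ext this
  have hbij : Function.Bijective e := by
    constructor
    · rintro (i | i) (j | j) h <;> simp only [e, Sum.elim_inl, Sum.elim_inr] at h
      · exact congrArg Sum.inl (hcastinj i j (hFinj false _ _ h))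
      · exfalso
        have h' : (F false ((i : ℕ) : ZMod n)).1 = (F true ((j : ℕ) : ZMod n)).1 :=
          congrArg Subtype.val h
        obtain ⟨v, hv⟩ := hnonempty false ((i : ℕ) : ZMod n)
        exact Finset.disjoint_left.mp (hdisjF _ _) hv (h' ▸ hv)
      · exfalso
        have h' : (F true ((i : ℕ) : ZMod n)).1 = (F false ((j : ℕ) : ZMod n)).1 :=
          congrArg Subtype.val h
        obtain ⟨v, hv⟩ := hnonempty true ((i : ℕ) : ZMod n)
        exact Finset.disjoint_left.mp (hdisjF _ _) (h' ▸ hv) hv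
      · exact congrArg Sum.inr (hcastinj i j (hFinj true _ _ h))
    · rintro ⟨S, hcard, hind⟩
      obtain ⟨s, i₀, hS⟩ := classify h2 hn S hcard hind
      have hi₀ : ((⟨i₀.val, ZMod.val_lt i₀⟩ : Fin n) : ℕ) = i₀.val := rfl
      have hcast : (((⟨i₀.val, ZMod.val_lt i₀⟩ : Fin n) : ℕ) : ZMod n) = i₀ := by
        rw [hi₀, ZMod.natCast_zmod_val]
      cases s
      · exact ⟨Sum.inl ⟨i₀.val, ZMod.val_lt i₀⟩, by
          simp only [e, Sum.elim_inl, F]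
          apply Subtype.ext
          simp only
          rw [hcast, hS]⟩
      · exact ⟨Sum.inr ⟨i₀.val, ZMod.val_lt i₀⟩, by
          simp only [e, Sum.elim_inr, F]
          apply Subtype.ext
          simp only
          rw [hcast, hS]⟩
  -- adjacency
  have hadj : ∀ x y, (Hk (CL n) (n - 1)).Adj (e x) (e y) ↔
      (completeBipartiteGraph (Fin n) (Fin n)).Adj x y := by
    have hAdjIff : ∀ a b : V, (Hk (CL n) (n - 1)).Adj a b ↔ a ≠ b ∧ Disjoint a.1 b.1 := by
      intro a b
      rw [Hk, SimpleGraph.fromRel_adj]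
      constructor
      · rintro ⟨h1, h2' | h2'⟩
        · exact ⟨h1, h2'⟩
        · exact ⟨h1, h2'.symm⟩
      · rintro ⟨h1, h2'⟩
        exact ⟨h1, Or.inl h2'⟩
    rintro (i | i) (j | j)
    · simp only [e, Sum.elim_inl, hAdjIff, completeBipartiteGraph_adj]
      constructor
      · rintro ⟨_, hd⟩; exact absurd hd (hnotdisj false _ _)
      · rintro (⟨_, h⟩ | ⟨h, _⟩) <;> simp [Sum.isRight, Sum.isLeft] at h
    · simp only [e, Sum.elim_inl, Sum.elim_inr, hAdjIff, completeBipartiteGraph_adj]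
      constructor
      · intro _; left; exact ⟨rfl, rfl⟩
      · intro _
        refine ⟨?_, hdisjF _ _⟩
        intro h
        have h' : (F false ((i : ℕ) : ZMod n)).1 = (F true ((j : ℕ) : ZMod n)).1 :=
          congrArg Subtype.val h
        obtain ⟨v, hv⟩ := hnonempty false ((i : ℕ) : ZMod n)
        exact Finset.disjoint_left.mp (hdisjF _ _) hv (h' ▸ hv)
    · simp only [e, Sum.elim_inl, Sum.elim_inr, hAdjIff, completeBipartiteGraph_adj]
      constructor
      · intro _; right; exact ⟨rfl, rfl⟩
      · intro _
        refine ⟨?_, (hdisjF _ _).symm⟩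
        intro h
        obtain ⟨v, hv⟩ := hnonempty true ((i : ℕ) : ZMod n)
        have h' : (F true ((i : ℕ) : ZMod n)).1 = (F false ((j : ℕ) : ZMod n)).1 :=
          congrArg Subtype.val h
        exact Finset.disjoint_left.mp (hdisjF _ _) (h' ▸ hv) hv
    · simp only [e, Sum.elim_inr, hAdjIff, completeBipartiteGraph_adj]
      constructor
      · rintro ⟨_, hd⟩; exact absurd hd (hnotdisj true _ _)
      · rintro (⟨h, _⟩ | ⟨_, h⟩) <;> simp [Sum.isRight, Sum.isLeft] at h
  refine ⟨{ toEquiv := (Equiv.ofBijective e hbij).symm, map_rel_iff' := ?_ }⟩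
  intro a b
  have ha := (Equiv.ofBijective e hbij).apply_symm_apply a
  have hb := (Equiv.ofBijective e hbij).apply_symm_apply b
  rw [← hadj ((Equiv.ofBijective e hbij).symm a) ((Equiv.ofBijective e hbij).symm b)]
  simp only [Equiv.ofBijective_apply] at ha hb
  rw [ha, hb]
end

section
/- Let k ≥ 3. The induced k-independent graph H_k(W_{3k+1}) of the squared cycle graph W_{3k+1} is isomorphic (as a simple graph) to the circulant graph on ZMod (3k+1) in which i and j are adjacent iff the canonical representative of j - i in {0, 1, ..., 3k} lies in the interval [k, 2k+1]. -/
/-- The squared cycle graph `W n` on `ZMod n`: distinct `i` and `j` are adjacent iff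
`j - i ∈ {1, -1, 2, -2}`. -/
def W (n : ℕ) : SimpleGraph (ZMod n) :=
  SimpleGraph.fromRel (fun i j => j - i = 1 ∨ j - i = 2)

/-- The circulant graph on `ZMod (3k+1)` in which `i` and `j` are adjacent iff the
canonical representative of `j - i` lies in the interval `[k, 2k+1]`. -/
def Circulant (k : ℕ) : SimpleGraph (ZMod (3 * k + 1)) :=
  SimpleGraph.fromRel (fun i j => k ≤ (j - i).val ∧ (j - i).val ≤ 2 * k + 1)

namespace Stmt2Proof

variable {k : ℕ}

instance : NeZero (3*k+1) := ⟨by omega⟩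

lemma cast_inj (hk : 3 ≤ k) {x y : ℕ} (hx : x < 3*k+1) (hy : y < 3*k+1) :
    ((x : ZMod (3*k+1)) = (y : ZMod (3*k+1))) ↔ x = y := by
  rw [ZMod.natCast_eq_natCast_iff, Nat.ModEq, Nat.mod_eq_of_lt hx, Nat.mod_eq_of_lt hy]

lemma one_ne_zero' (hk : 3 ≤ k) : (1 : ZMod (3*k+1)) ≠ 0 := by
  have := (cast_inj (x := 1) (y := 0) hk (by omega) (by omega))
  simpa using this.not.mpr (by omega)

lemma two_ne_zero' (hk : 3 ≤ k) : (2 : ZMod (3*k+1)) ≠ 0 := by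
  have := (cast_inj (x := 2) (y := 0) hk (by omega) (by omega))
  simpa using this.not.mpr (by omega)

lemma adj_cases (hk : 3 ≤ k) {v w : ZMod (3*k+1)}
    (h : w = v + 1 ∨ w = v + 2 ∨ v = w + 1 ∨ v = w + 2) : (W (3*k+1)).Adj v w := by
  have h1 := one_ne_zero' hk
  have h2 := two_ne_zero' hk
  rw [W, SimpleGraph.fromRel_adj]
  constructor
  · rintro rfl
    rcases h with h | h | h | h
    · exact h1 (by linear_combination -h)
    · exact h2 (by linear_combination -h)
    · exact h1 (by linear_combination -h)
    · exact h2 (by linear_combination -h)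
  · rcases h with h | h | h | h
    · exact Or.inl (Or.inl (by linear_combination h))
    · exact Or.inl (Or.inr (by linear_combination h))
    · exact Or.inr (Or.inl (by linear_combination h))
    · exact Or.inr (Or.inr (by linear_combination h))

/-- the canonical maximum independent set starting at `a` -/
def Sset (k : ℕ) (a : ZMod (3*k+1)) : Finset (ZMod (3*k+1)) :=
  (Finset.range k).image (fun i => a + ((3*i : ℕ) : ZMod (3*k+1)))

lemma mem_Sset {a v : ZMod (3*k+1)} :
    v ∈ Sset k a ↔ ∃ i < k, v = a + ((3*i : ℕ) : ZMod (3*k+1)) := by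
  simp [Sset, eq_comm]

lemma card_Sset (hk : 3 ≤ k) (a : ZMod (3*k+1)) : (Sset k a).card = k := by
  rw [Sset, Finset.card_image_of_injOn, Finset.card_range]
  intro i hi j hj hij
  simp only [Finset.mem_coe, Finset.mem_range] at hi hj
  have : ((3*i : ℕ) : ZMod (3*k+1)) = ((3*j : ℕ) : ZMod (3*k+1)) := by
    exact add_left_cancel hij
  rw [cast_inj hk (by omega) (by omega)] at this
  omega

lemma indep_Sset (hk : 3 ≤ k) (a : ZMod (3*k+1)) : IsIndep (W (3*k+1)) (Sset k a) := by
  intro v hv w hw hadj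
  rw [mem_Sset] at hv hw
  obtain ⟨i, hi, rfl⟩ := hv
  obtain ⟨j, hj, rfl⟩ := hw
  rw [W, SimpleGraph.fromRel_adj] at hadj
  obtain ⟨hne, hc⟩ := hadj
  rcases hc with (h | h) | (h | h)
  · have : ((3*j : ℕ) : ZMod (3*k+1)) = ((3*i + 1 : ℕ) : ZMod (3*k+1)) := by
      push_cast at h ⊢; linear_combination h
    rw [cast_inj hk (by omega) (by omega)] at this; omega
  · have : ((3*j : ℕ) : ZMod (3*k+1)) = ((3*i + 2 : ℕ) : ZMod (3*k+1)) := by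
      push_cast at h ⊢; linear_combination h
    rw [cast_inj hk (by omega) (by omega)] at this; omega
  · have : ((3*i : ℕ) : ZMod (3*k+1)) = ((3*j + 1 : ℕ) : ZMod (3*k+1)) := by
      push_cast at h ⊢; linear_combination h
    rw [cast_inj hk (by omega) (by omega)] at this; omega
  · have : ((3*i : ℕ) : ZMod (3*k+1)) = ((3*j + 2 : ℕ) : ZMod (3*k+1)) := by
      push_cast at h ⊢; linear_combination h
    rw [cast_inj hk (by omega) (by omega)] at this; omega

lemma cast_eq_of (hk : 3 ≤ k) {x y t : ℕ} (h : x = y + (3*k+1)*t) :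
    ((x:ℕ):ZMod (3*k+1)) = ((y:ℕ):ZMod (3*k+1)) := by
  subst h; rw [Nat.cast_add, Nat.cast_mul, ZMod.natCast_self, zero_mul, add_zero]

/-- the blocks covering -/
def cover (k : ℕ) (S : Finset (ZMod (3*k+1))) : Finset (ZMod (3*k+1)) :=
  S.biUnion (fun v => {v, v+1, v+2})

lemma mem_cover {S : Finset (ZMod (3*k+1))} {z : ZMod (3*k+1)} :
    z ∈ cover k S ↔ ∃ w ∈ S, z = w ∨ z = w + 1 ∨ z = w + 2 := by
  simp [cover]

lemma card_cover (hk : 3 ≤ k) {S : Finset (ZMod (3*k+1))} (hind : IsIndep (W (3*k+1)) S) :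
    (cover k S).card = 3 * S.card := by
  rw [cover, Finset.card_biUnion]
  · have hcard3 : ∀ v : ZMod (3*k+1), ({v, v+1, v+2} : Finset _).card = 3 := by
      intro v
      rw [Finset.card_insert_of_notMem, Finset.card_insert_of_notMem, Finset.card_singleton]
      · simp only [Finset.mem_singleton]
        intro h; exact one_ne_zero' hk (by linear_combination -h)
      · simp only [Finset.mem_insert, Finset.mem_singleton]
        rintro (h | h)
        · exact one_ne_zero' hk (by linear_combination -h)
        · exact two_ne_zero' hk (by linear_combination -h)
    simp only [hcard3, Finset.sum_const, smul_eq_mul]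
    ring
  · intro v hv w hw hvw
    have hadj : ¬ (W (3*k+1)).Adj v w := hind v hv w hw
    rw [Function.onFun, Finset.disjoint_left]
    intro z hz1 hz2
    simp only [Finset.mem_insert, Finset.mem_singleton] at hz1 hz2
    rcases hz1 with h1 | h1 | h1 <;> rcases hz2 with h2 | h2 | h2 <;>
      first
        | exact hvw (by linear_combination h1 - h2)
        | exact hvw (by linear_combination h2 - h1)
        | exact hadj (adj_cases hk (Or.inl (by linear_combination h2 - h1)))
        | exact hadj (adj_cases hk (Or.inl (by linear_combination h1 - h2)))
        | exact hadj (adj_cases hk (Or.inr (Or.inl (by linear_combination h2 - h1))))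
        | exact hadj (adj_cases hk (Or.inr (Or.inl (by linear_combination h1 - h2))))
        | exact hadj (adj_cases hk (Or.inr (Or.inr (Or.inl (by linear_combination h2 - h1)))))
        | exact hadj (adj_cases hk (Or.inr (Or.inr (Or.inl (by linear_combination h1 - h2)))))
        | exact hadj (adj_cases hk (Or.inr (Or.inr (Or.inr (by linear_combination h2 - h1)))))
        | exact hadj (adj_cases hk (Or.inr (Or.inr (Or.inr (by linear_combination h1 - h2)))))

lemma exists_hole (hk : 3 ≤ k) {S : Finset (ZMod (3*k+1))} (hcard : S.card = k)
    (hind : IsIndep (W (3*k+1)) S) :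
    ∃ u : ZMod (3*k+1), u ∉ cover k S ∧ ∀ z, z ≠ u → z ∈ cover k S := by
  have hcov : (cover k S).card = 3*k := by rw [card_cover hk hind, hcard]
  have huniv : Fintype.card (ZMod (3*k+1)) = 3*k+1 := ZMod.card _
  have hcompl : (cover k S)ᶜ.card = 1 := by
    rw [Finset.card_compl, hcov, huniv]; omega
  obtain ⟨u, hu⟩ := Finset.card_eq_one.mp hcompl
  refine ⟨u, ?_, ?_⟩
  · have : u ∈ (cover k S)ᶜ := by rw [hu]; exact Finset.mem_singleton_self u
    simpa using this
  · intro z hz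
    by_contra hzc
    have : z ∈ (cover k S)ᶜ := Finset.mem_compl.mpr hzc
    rw [hu, Finset.mem_singleton] at this
    exact hz this

lemma structure_thm (hk : 3 ≤ k) {S : Finset (ZMod (3*k+1))} (hcard : S.card = k)
    (hind : IsIndep (W (3*k+1)) S) : ∃ a, S = Sset k a := by
  obtain ⟨u, hu, hcov⟩ := exists_hole hk hcard hind
  have hSsub : ∀ v ∈ S, v ∈ cover k S := fun v hv => mem_cover.mpr ⟨v, hv, Or.inl rfl⟩
  have h1 := one_ne_zero' hk
  have hu1 : u + 1 ∈ S := by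
    have hm : u + 1 ∈ cover k S := hcov _ (fun h => h1 (by linear_combination h))
    rw [mem_cover] at hm
    obtain ⟨w, hw, h | h | h⟩ := hm
    · rwa [h]
    · have hwu : w = u := by linear_combination -h
      exact absurd (hSsub w hw) (by rw [hwu]; exact hu)
    · exact absurd (mem_cover.mpr ⟨w, hw, Or.inr (Or.inl (by linear_combination h))⟩) hu
  have chain : ∀ i, i < k → u + 1 + ((3*i : ℕ) : ZMod (3*k+1)) ∈ S := by
    intro i
    induction i with
    | zero => intro _; simpa using hu1
    | succ i ih =>
      intro hik
      have hv := ih (by omega)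
      set v := u + 1 + ((3*i:ℕ) : ZMod (3*k+1)) with hvdef
      have hgoal_eq : u + 1 + ((3*(i+1):ℕ) : ZMod (3*k+1)) = v + 3 := by
        rw [hvdef]; push_cast; ring
      rw [hgoal_eq]
      have hvd2 : v = u + 1 + 3*(i : ZMod (3*k+1)) := by rw [hvdef]; push_cast; ring
      have hne_u : v + 3 ≠ u := by
        intro h
        have he : ((3*i + 4 : ℕ) : ZMod (3*k+1)) = ((0:ℕ) : ZMod (3*k+1)) := by
          push_cast
          linear_combination h - hvd2
        rw [cast_inj hk (by omega) (by omega)] at he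
        omega
      have hm : v + 3 ∈ cover k S := hcov _ hne_u
      rw [mem_cover] at hm
      obtain ⟨w, hw, h | h | h⟩ := hm
      · rwa [h]
      · exact absurd (adj_cases hk (Or.inr (Or.inl (by linear_combination -h))))
          (hind v hv w hw)
      · exact absurd (adj_cases hk (Or.inl (by linear_combination -h)))
          (hind v hv w hw)
  refine ⟨u + 1, ?_⟩
  have hsub : Sset k (u+1) ⊆ S := by
    intro v hv
    rw [mem_Sset] at hv
    obtain ⟨i, hik, rfl⟩ := hv
    exact chain i hik
  exact (Finset.eq_of_subset_of_card_le hsub (by rw [hcard, card_Sset hk])).symm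

lemma three_unit (hk : 3 ≤ k) : IsUnit (3 : ZMod (3*k+1)) := by
  have h3 : ((3:ℕ) : ZMod (3*k+1)) = 3 := by push_cast; ring
  rw [← h3, ZMod.isUnit_iff_coprime, Nat.Prime.coprime_iff_not_dvd Nat.prime_three]
  omega

lemma not_mem_Sset_sub (hk : 3 ≤ k) (a : ZMod (3*k+1)) :
    a + ((3*k - 2 : ℕ) : ZMod (3*k+1)) ∉ Sset k a := by
  rw [mem_Sset]
  rintro ⟨i, hik, h⟩
  have he : ((3*k-2 : ℕ) : ZMod (3*k+1)) = ((3*i : ℕ) : ZMod (3*k+1)) := add_left_cancel h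
  rw [cast_inj hk (by omega) (by omega)] at he
  omega

lemma Sset_injective (hk : 3 ≤ k) : Function.Injective (Sset k) := by
  intro a b hab
  have ha : a ∈ Sset k b := by
    rw [← hab]; exact mem_Sset.mpr ⟨0, by omega, by simp⟩
  rw [mem_Sset] at ha
  obtain ⟨j, hj, hja⟩ := ha
  rcases Nat.eq_zero_or_pos j with rfl | hjpos
  · simpa using hja
  · exfalso
    apply not_mem_Sset_sub hk a
    rw [hab, mem_Sset]
    refine ⟨j - 1, by omega, ?_⟩
    rw [hja, add_assoc, ← Nat.cast_add]
    congr 1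
    exact cast_eq_of hk (t := 1) (by omega)

lemma disjoint_iff_val (hk : 3 ≤ k) {x y : ZMod (3*k+1)} (hxy : x ≠ y) :
    Disjoint (Sset k (3*x)) (Sset k (3*y)) ↔
      (k ≤ (y-x).val ∧ (y-x).val ≤ 2*k+1) := by
  set d := (y - x).val with hd
  have hdc : ((d : ℕ) : ZMod (3*k+1)) = y - x := by
    rw [hd, ZMod.natCast_val, ZMod.cast_id]
  have hd0 : d ≠ 0 := by
    intro h
    apply hxy
    have : y - x = 0 := by rw [← hdc, h]; simp
    linear_combination -this
  have hdlt : d < 3*k+1 := ZMod.val_lt _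
  have hyx : y = x + ((d:ℕ) : ZMod (3*k+1)) := by linear_combination -hdc
  constructor
  · intro hdisj
    by_contra hcon
    have hcas : d < k ∨ 2*k+1 < d := by omega
    rcases hcas with h | h
    · have h1 : (3*y) ∈ Sset k (3*x) :=
        mem_Sset.mpr ⟨d, by omega, by rw [hyx]; push_cast; ring⟩
      have h2 : (3*y) ∈ Sset k (3*y) := mem_Sset.mpr ⟨0, by omega, by simp⟩
      exact absurd h1 (Finset.disjoint_right.mp hdisj h2)
    · set c := 3*k+1-d with hc
      have e1 : ((3*d + 3*c : ℕ) : ZMod (3*k+1)) = ((0:ℕ):ZMod (3*k+1)) :=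
        cast_eq_of hk (t := 3) (by omega)
      have h1 : (3*x) ∈ Sset k (3*y) := by
        refine mem_Sset.mpr ⟨c, by omega, ?_⟩
        rw [hyx]
        push_cast at e1 ⊢
        linear_combination -e1
      have h2 : (3*x) ∈ Sset k (3*x) := mem_Sset.mpr ⟨0, by omega, by simp⟩
      exact absurd h1 (Finset.disjoint_left.mp hdisj h2)
  · rintro ⟨hk1, hk2⟩
    rw [Finset.disjoint_left]
    intro z hz1 hz2
    obtain ⟨i, hi, rfl⟩ := mem_Sset.mp hz1
    obtain ⟨j, hj, hz⟩ := mem_Sset.mp hz2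
    have hxy3 : x + ((i:ℕ) : ZMod (3*k+1)) = y + ((j:ℕ):ZMod (3*k+1)) := by
      apply (three_unit hk).mul_left_cancel
      push_cast at hz ⊢
      linear_combination hz
    have hij : ((i : ℕ) : ZMod (3*k+1)) = ((d + j : ℕ) : ZMod (3*k+1)) := by
      rw [hyx] at hxy3
      push_cast at hxy3 ⊢
      linear_combination hxy3
    rcases le_or_gt (d + j) (3*k) with h | h
    · rw [cast_inj hk (by omega) (by omega)] at hij
      omega
    · rw [cast_eq_of hk (x := d + j) (y := d + j - (3*k+1)) (t := 1) (by omega)] at hij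
      rw [cast_inj hk (by omega) (by omega)] at hij
      omega

def phi (hk : 3 ≤ k) :
    ZMod (3*k+1) → {S : Finset (ZMod (3*k+1)) // S.card = k ∧ IsIndep (W (3*k+1)) S} :=
  fun x => ⟨Sset k (3*x), card_Sset hk _, indep_Sset hk _⟩

lemma phi_bij (hk : 3 ≤ k) : Function.Bijective (phi hk) := by
  constructor
  · intro x y h
    have h2 : Sset k (3*x) = Sset k (3*y) := congrArg Subtype.val h
    have h3 : 3*x = 3*y := Sset_injective hk h2
    exact (three_unit hk).mul_left_cancel h3
  · rintro ⟨S, hcard, hind⟩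
    obtain ⟨a, ha⟩ := structure_thm hk hcard hind
    obtain ⟨u, hu⟩ := three_unit hk
    refine ⟨(↑u⁻¹ : ZMod (3*k+1)) * a, ?_⟩
    apply Subtype.ext
    show Sset k (3 * ((↑u⁻¹ : ZMod (3*k+1)) * a)) = S
    rw [ha]
    congr 1
    rw [← hu, ← mul_assoc, Units.mul_inv, one_mul]

lemma val_symm (hk : 3 ≤ k) {a b : ZMod (3*k+1)} (hab : a ≠ b) :
    (k ≤ (a-b).val ∧ (a-b).val ≤ 2*k+1) ↔ (k ≤ (b-a).val ∧ (b-a).val ≤ 2*k+1) := by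
  have h1 : (a - b) ≠ 0 := sub_ne_zero.mpr hab
  have h2 : (b - a) = -(a - b) := by ring
  have h3 : (a-b).val ≠ 0 := fun h => h1 (ZMod.val_eq_zero _ |>.mp h)
  have h4 : (a-b).val < 3*k+1 := ZMod.val_lt _
  rw [h2, ZMod.neg_val, if_neg h1]
  omega

end Stmt2Proof


/-- For `k ≥ 3`, the induced `k`-independent graph of the squared cycle graph
`W (3k+1)` is isomorphic to the circulant graph on `ZMod (3k+1)` with connection
set `[k, 2k+1]`. -/
theorem stmt_2 (k : ℕ) (hk : 3 ≤ k) :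
    Nonempty (Hk (W (3 * k + 1)) k ≃g Circulant k) := by
  refine ⟨SimpleGraph.Iso.symm ⟨Equiv.ofBijective _ (Stmt2Proof.phi_bij hk), ?_⟩⟩
  intro a b
  show (Hk (W (3*k+1)) k).Adj (Stmt2Proof.phi hk a) (Stmt2Proof.phi hk b) ↔
    (Circulant k).Adj a b
  rw [Hk, SimpleGraph.fromRel_adj, Circulant, SimpleGraph.fromRel_adj]
  have hne : Stmt2Proof.phi hk a ≠ Stmt2Proof.phi hk b ↔ a ≠ b :=
    (Stmt2Proof.phi_bij hk).injective.ne_iff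
  constructor
  · rintro ⟨hne', hdisj⟩
    have hab : a ≠ b := hne.mp hne'
    refine ⟨hab, Or.inl ?_⟩
    rcases hdisj with h | h
    · exact (Stmt2Proof.disjoint_iff_val hk hab).mp h
    · exact (Stmt2Proof.val_symm hk hab).mp
        ((Stmt2Proof.disjoint_iff_val hk (Ne.symm hab)).mp h)
  · rintro ⟨hab, hcond⟩
    refine ⟨hne.mpr hab, Or.inl ?_⟩
    rcases hcond with h | h
    · exact (Stmt2Proof.disjoint_iff_val hk hab).mpr h
    · exact (Stmt2Proof.disjoint_iff_val hk hab).mpr ((Stmt2Proof.val_symm hk hab).mp h)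
end

section
/- Let k ≥ 3. The induced k-independent graph H_k(W_{3k+1}) of the squared cycle graph W_{3k+1} is regular of degree k + 2; that is, every vertex of H_k(W_{3k+1}) (i.e., every independent k-set of W_{3k+1}) is disjoint from exactly k + 2 other independent k-sets. -/
namespace SqAux

lemma W_adj {n : ℕ} {x y : ZMod n} :
    (W n).Adj x y ↔ x ≠ y ∧ (y - x = 1 ∨ y - x = 2 ∨ x - y = 1 ∨ x - y = 2) := by
  simp [W, SimpleGraph.fromRel_adj]; tauto

variable {k : ℕ}

lemma castinj {x y : ℕ} (hx : x < 3*k+1) (hy : y < 3*k+1)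
    (h : (x : ZMod (3*k+1)) = y) : x = y := by
  have := congrArg ZMod.val h
  rwa [ZMod.val_cast_of_lt hx, ZMod.val_cast_of_lt hy] at this

lemma castzero {x : ℕ} (hx : x < 3*k+1) (h : (x : ZMod (3*k+1)) = 0) : x = 0 :=
  castinj hx (by omega) (by simpa using h)

lemma zero_of_dvd {x : ℕ} (hx : x ≤ 2*k) (h : (3*k+1 : ℕ) ∣ 3*x) : x = 0 := by
  obtain ⟨t, ht⟩ := h
  have h2 : t ≤ 1 := by nlinarith
  interval_cases t <;> omega

lemma cast3inj {x y : ℕ} (hx : x ≤ 2*k) (hy : y ≤ 2*k)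
    (h : ((3*x : ℕ) : ZMod (3*k+1)) = ((3*y : ℕ) : ZMod (3*k+1))) : x = y := by
  have key : ∀ x y : ℕ, x ≤ 2*k → y ≤ x →
      ((3*x : ℕ) : ZMod (3*k+1)) = ((3*y : ℕ) : ZMod (3*k+1)) → x = y := by
    intro x y hx hyx h
    have h0 : ((3*x - 3*y : ℕ) : ZMod (3*k+1)) = 0 := by
      rw [Nat.cast_sub (by omega), h, sub_self]
    rw [ZMod.natCast_eq_zero_iff] at h0
    rw [show 3*x - 3*y = 3*(x-y) by omega] at h0
    have := zero_of_dvd (x := x - y) (by omega) h0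
    omega
  rcases le_total y x with hle | hle
  · exact key x y hx hle h
  · exact (key y x hy hle h.symm).symm

def f (k : ℕ) (a : ZMod (3*k+1)) : Finset (ZMod (3*k+1)) :=
  (Finset.range k).image (fun i => a + ((3*i : ℕ) : ZMod (3*k+1)))

lemma mem_f {a x : ZMod (3*k+1)} :
    x ∈ f k a ↔ ∃ i < k, x = a + ((3*i : ℕ) : ZMod (3*k+1)) := by
  simp [f, Finset.mem_image, eq_comm]

lemma card_f (hk : 3 ≤ k) (a : ZMod (3*k+1)) : (f k a).card = k := by
  rw [f, Finset.card_image_of_injOn, Finset.card_range]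
  intro i hi j hj h
  simp only [Finset.coe_range, Set.mem_Iio] at hi hj
  have h' : ((3*i : ℕ) : ZMod (3*k+1)) = ((3*j : ℕ) : ZMod (3*k+1)) := by linear_combination h
  exact cast3inj (x := i) (y := j) (by omega) (by omega) h'

lemma no_small_diff (hk : 3 ≤ k) {i j : ℕ} (hi : i < k) (hj : j < k) {e : ℕ}
    (he : e = 1 ∨ e = 2)
    (h : ((3*j:ℕ) : ZMod (3*k+1)) - ((3*i:ℕ) : ZMod (3*k+1)) = (e:ℕ)) : False := by
  rcases le_total i j with hle | hle
  · have h2 : ((3*(j-i) : ℕ) : ZMod (3*k+1)) = (e : ℕ) := by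
      rw [show 3*(j-i) = 3*j - 3*i by omega, Nat.cast_sub (by omega), h]
    have := castinj (by omega) (by omega) h2
    omega
  · have h1 : ((3*(i-j) : ℕ) : ZMod (3*k+1)) = ((3*i:ℕ) : ZMod (3*k+1)) - ((3*j:ℕ)) := by
      rw [show 3*(i-j) = 3*i - 3*j by omega, Nat.cast_sub (by omega)]
    have h2 : ((3*(i-j) + e : ℕ) : ZMod (3*k+1)) = 0 := by
      rw [Nat.cast_add, h1]
      linear_combination -h
    have := castzero (by omega) h2
    omega

lemma indep_f (hk : 3 ≤ k) (a : ZMod (3*k+1)) : IsIndep (W (3*k+1)) (f k a) := by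
  intro x hx y hy hadj
  obtain ⟨i, hi, rfl⟩ := mem_f.mp hx
  obtain ⟨j, hj, rfl⟩ := mem_f.mp hy
  rw [W_adj] at hadj
  obtain ⟨-, hc⟩ := hadj
  rcases hc with h | h | h | h
  · exact no_small_diff hk hi hj (Or.inl rfl) (by push_cast at h ⊢; linear_combination h)
  · exact no_small_diff hk hi hj (Or.inr rfl) (by push_cast at h ⊢; linear_combination h)
  · exact no_small_diff hk hj hi (Or.inl rfl) (by push_cast at h ⊢; linear_combination h)
  · exact no_small_diff hk hj hi (Or.inr rfl) (by push_cast at h ⊢; linear_combination h)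

def Bad (k : ℕ) : Finset (ZMod (3*k+1)) :=
  (Finset.range (2*k-1)).image
    (fun m => ((3*m : ℕ) : ZMod (3*k+1)) - ((3*(k-1) : ℕ) : ZMod (3*k+1)))

lemma bad_card (hk : 3 ≤ k) : (Bad k).card = 2*k-1 := by
  rw [Bad, Finset.card_image_of_injOn, Finset.card_range]
  intro m hm m' hm' h
  simp only [Finset.coe_range, Set.mem_Iio] at hm hm'
  have h' : ((3*m : ℕ) : ZMod (3*k+1)) = ((3*m' : ℕ) : ZMod (3*k+1)) := by linear_combination h
  exact cast3inj (x := m) (y := m') (by omega) (by omega) h'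

lemma mem_bad (hk : 3 ≤ k) {c : ZMod (3*k+1)} :
    c ∈ Bad k ↔ ∃ i < k, ∃ j < k, c = ((3*i:ℕ) : ZMod (3*k+1)) - ((3*j:ℕ) : ZMod (3*k+1)) := by
  constructor
  · intro hc
    rw [Bad, Finset.mem_image] at hc
    obtain ⟨m, hm, rfl⟩ := hc
    rw [Finset.mem_range] at hm
    rcases le_or_gt m (k-1) with hle | hlt
    · refine ⟨0, by omega, k-1-m, by omega, ?_⟩
      have h1 : ((3*(k-1-m) : ℕ) : ZMod (3*k+1)) = ↑(3*(k-1)) - ↑(3*m) := by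
        rw [show 3*(k-1-m) = 3*(k-1) - 3*m by omega, Nat.cast_sub (by omega)]
      rw [h1]; push_cast; ring
    · refine ⟨m-(k-1), by omega, 0, by omega, ?_⟩
      have h1 : ((3*(m-(k-1)) : ℕ) : ZMod (3*k+1)) = ↑(3*m) - ↑(3*(k-1)) := by
        rw [show 3*(m-(k-1)) = 3*m - 3*(k-1) by omega, Nat.cast_sub (by omega)]
      rw [h1]; push_cast; ring
  · rintro ⟨i, hi, j, hj, rfl⟩
    rw [Bad, Finset.mem_image]
    refine ⟨i + (k-1) - j, Finset.mem_range.mpr (by omega), ?_⟩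
    have h1 : (3*(i+(k-1)-j) + 3*j : ℕ) = 3*i + 3*(k-1) := by omega
    have h2 := congrArg (Nat.cast : ℕ → ZMod (3*k+1)) h1
    push_cast at h2
    push_cast
    linear_combination h2

lemma disj_iff (hk : 3 ≤ k) (a b : ZMod (3*k+1)) :
    Disjoint (f k a) (f k b) ↔ b - a ∉ Bad k := by
  have key : ¬ Disjoint (f k a) (f k b) ↔ b - a ∈ Bad k := by
    rw [Finset.not_disjoint_iff, mem_bad hk]
    constructor
    · rintro ⟨x, hxa, hxb⟩
      rw [mem_f] at hxa hxb
      obtain ⟨i, hi, rfl⟩ := hxa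
      obtain ⟨j, hj, hx⟩ := hxb
      exact ⟨i, hi, j, hj, by linear_combination -hx⟩
    · rintro ⟨i, hi, j, hj, hc⟩
      exact ⟨a + ((3*i:ℕ) : ZMod (3*k+1)), mem_f.mpr ⟨i, hi, rfl⟩,
        mem_f.mpr ⟨j, hj, by linear_combination -hc⟩⟩
  constructor
  · intro hD hM
    exact (key.mpr hM) hD
  · intro hM
    by_contra hD
    exact hM (key.mp hD)

lemma f_inj (hk : 3 ≤ k) {a b : ZMod (3*k+1)} (h : f k a = f k b) : a = b := by
  have ha : a ∈ f k a := mem_f.mpr ⟨0, by omega, by simp⟩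
  have hb : b ∈ f k b := mem_f.mpr ⟨0, by omega, by simp⟩
  rw [h] at ha
  rw [← h] at hb
  obtain ⟨j, hj, haj⟩ := mem_f.mp ha
  obtain ⟨i, hi, hbi⟩ := mem_f.mp hb
  have h0 : ((3*(i+j) : ℕ) : ZMod (3*k+1)) = ((3*0 : ℕ) : ZMod (3*k+1)) := by
    push_cast at haj hbi ⊢
    linear_combination -haj - hbi
  have := cast3inj (by omega) (by omega) h0
  have hj0 : j = 0 := by omega
  rw [hj0] at haj
  simpa using haj


lemma ne_cast {x y : ℕ} (hx : x < 3*k+1) (hy : y < 3*k+1) (hxy : x ≠ y) :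
    (x : ZMod (3*k+1)) ≠ (y : ZMod (3*k+1)) := fun h => hxy (castinj hx hy h)

lemma one_ne (hk : 3 ≤ k) : (1 : ZMod (3*k+1)) ≠ 0 := by
  exact_mod_cast ne_cast (x := 1) (y := 0) (by omega) (by omega) (by omega)

lemma two_ne (hk : 3 ≤ k) : (2 : ZMod (3*k+1)) ≠ 0 := by
  exact_mod_cast ne_cast (x := 2) (y := 0) (by omega) (by omega) (by omega)

lemma two_ne_one (hk : 3 ≤ k) : (2 : ZMod (3*k+1)) ≠ 1 := by
  exact_mod_cast ne_cast (x := 2) (y := 1) (by omega) (by omega) (by omega)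

lemma no_adj_diff (hk : 3 ≤ k) {S : Finset (ZMod (3*k+1))}
    (hindep : IsIndep (W (3*k+1)) S) {x y : ZMod (3*k+1)} (hx : x ∈ S) (hy : y ∈ S)
    (h : y - x = 1 ∨ y - x = 2 ∨ x - y = 1 ∨ x - y = 2) : False := by
  have hne : x ≠ y := by
    rintro rfl
    simp only [sub_self] at h
    rcases h with h | h | h | h
    exacts [one_ne hk h.symm, two_ne hk h.symm, one_ne hk h.symm, two_ne hk h.symm]
  exact hindep x hx y hy (W_adj.mpr ⟨hne, h⟩)

lemma exists_f (hk : 3 ≤ k) (S : Finset (ZMod (3*k+1))) (hcard : S.card = k)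
    (hindep : IsIndep (W (3*k+1)) S) : ∃ a, S = f k a := by
  classical
  have h1ne := one_ne hk
  have h2ne := two_ne hk
  have h21 := two_ne_one hk
  set D : Finset (ZMod (3*k+1)) := {0, 1, 2} with hD
  have hDcard : D.card = 3 := by
    rw [hD]
    rw [Finset.card_insert_of_notMem (by simp [Ne.symm h1ne, Ne.symm h2ne]),
        Finset.card_insert_of_notMem (by simp [Ne.symm h21]), Finset.card_singleton]
  set N : Finset (ZMod (3*k+1)) := (S ×ˢ D).image (fun p => p.1 - p.2) with hN
  have hNcard : N.card = 3*k := by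
    rw [hN, Finset.card_image_of_injOn, Finset.card_product, hcard, hDcard, mul_comm]
    rintro ⟨x, d⟩ hp ⟨y, e⟩ hq h
    simp only [Finset.coe_product, Set.mem_prod, Finset.mem_coe, hD,
      Finset.mem_insert, Finset.mem_singleton] at hp hq
    obtain ⟨hxS, hd⟩ := hp
    obtain ⟨hyS, he⟩ := hq
    simp only at h
    rcases hd with rfl | rfl | rfl <;> rcases he with rfl | rfl | rfl
    · exact Prod.ext (by linear_combination h) rfl
    · exact absurd (show y - x = 1 by linear_combination -h) (fun hc =>
        no_adj_diff hk hindep hxS hyS (Or.inl hc))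
    · exact absurd (show y - x = 2 by linear_combination -h) (fun hc =>
        no_adj_diff hk hindep hxS hyS (Or.inr (Or.inl hc)))
    · exact absurd (show x - y = 1 by linear_combination h) (fun hc =>
        no_adj_diff hk hindep hyS hxS (Or.inl hc))
    · exact Prod.ext (by linear_combination h) rfl
    · exact absurd (show y - x = 1 by linear_combination -h) (fun hc =>
        no_adj_diff hk hindep hxS hyS (Or.inl hc))
    · exact absurd (show x - y = 2 by linear_combination h) (fun hc =>
        no_adj_diff hk hindep hyS hxS (Or.inr (Or.inl hc)))
    · exact absurd (show x - y = 1 by linear_combination h) (fun hc =>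
        no_adj_diff hk hindep hyS hxS (Or.inl hc))
    · exact Prod.ext (by linear_combination h) rfl
  have hTcard : Nᶜ.card = 1 := by
    rw [Finset.card_compl, hNcard, ZMod.card]
    omega
  obtain ⟨x0, hx0⟩ := Finset.card_eq_one.mp hTcard
  have memN : ∀ x : ZMod (3*k+1), x ∈ N ↔ (x ∈ S ∨ x + 1 ∈ S ∨ x + 2 ∈ S) := by
    intro x
    rw [hN]
    simp only [Finset.mem_image, Finset.mem_product]
    constructor
    · rintro ⟨⟨s, d⟩, ⟨hs, hd⟩, rfl⟩
      rw [hD] at hd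
      simp only [Finset.mem_insert, Finset.mem_singleton] at hd
      simp only
      rcases hd with rfl | rfl | rfl
      · left; simpa using hs
      · right; left; rw [show s - 1 + 1 = s by ring]; exact hs
      · right; right; rw [show s - 2 + 2 = s by ring]; exact hs
    · rintro (h | h | h)
      · exact ⟨(x, 0), ⟨h, by rw [hD]; simp⟩, by simp⟩
      · exact ⟨(x+1, 1), ⟨h, by rw [hD]; simp⟩, by simp⟩
      · exact ⟨(x+2, 2), ⟨h, by rw [hD]; simp⟩, by ring⟩
  have notN : ∀ x : ZMod (3*k+1), x ∉ N ↔ x = x0 := by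
    intro x
    rw [← Finset.mem_compl, hx0, Finset.mem_singleton]
  have empty0 : x0 ∉ S ∧ x0 + 1 ∉ S ∧ x0 + 2 ∉ S := by
    have h := (notN x0).mpr rfl
    rw [memN] at h
    push_neg at h
    exact h
  have haS : x0 + 3 ∈ S := by
    by_contra haS
    have hmem : x0 + 1 ∉ N := by
      rw [memN]
      push_neg
      refine ⟨empty0.2.1, ?_, ?_⟩
      · rw [show x0 + 1 + 1 = x0 + 2 by ring]; exact empty0.2.2
      · rw [show x0 + 1 + 2 = x0 + 3 by ring]; exact haS
    have h := (notN _).mp hmem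
    exact h1ne (by linear_combination h)
  have chain : ∀ i, i < k → x0 + 3 + ((3*i:ℕ) : ZMod (3*k+1)) ∈ S := by
    intro i
    induction i with
    | zero => intro _; simpa using haS
    | succ i ih =>
      intro hik
      have hiS := ih (by omega)
      by_contra hnext
      have h1 : x0 + 3 + ((3*i:ℕ) : ZMod (3*k+1)) + 1 ∉ S := fun hmem =>
        no_adj_diff hk hindep hiS hmem (Or.inl (by ring))
      have h2 : x0 + 3 + ((3*i:ℕ) : ZMod (3*k+1)) + 2 ∉ S := fun hmem =>
        no_adj_diff hk hindep hiS hmem (Or.inr (Or.inl (by ring)))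
      have h3 : x0 + 3 + ((3*i:ℕ) : ZMod (3*k+1)) + 3 ∉ S := by
        intro hmem
        apply hnext
        have heq : x0 + 3 + ((3*(i+1):ℕ) : ZMod (3*k+1))
            = x0 + 3 + ((3*i:ℕ) : ZMod (3*k+1)) + 3 := by push_cast; ring
        rw [heq]
        exact hmem
      have hmem : x0 + 3 + ((3*i:ℕ) : ZMod (3*k+1)) + 1 ∉ N := by
        rw [memN]
        push_neg
        refine ⟨h1, ?_, ?_⟩
        · rw [show ∀ z : ZMod (3*k+1), z + 1 + 1 = z + 2 from fun z => by ring]; exact h2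
        · rw [show ∀ z : ZMod (3*k+1), z + 1 + 2 = z + 3 from fun z => by ring]; exact h3
      have heq := (notN _).mp hmem
      have hz : ((3*i+4 : ℕ) : ZMod (3*k+1)) = 0 := by
        push_cast at heq ⊢
        linear_combination heq
      have := castzero (by omega) hz
      omega
  have hsub : f k (x0 + 3) ⊆ S := by
    intro x hx
    obtain ⟨i, hi, rfl⟩ := mem_f.mp hx
    exact chain i hi
  exact ⟨x0 + 3, (Finset.eq_of_subset_of_card_le hsub (by rw [hcard, card_f hk])).symm⟩

end SqAux

/-- For `k ≥ 3`, the induced `k`-independent graph of `W (3k+1)` is `(k+2)`-regular: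
every independent `k`-set of `W (3k+1)` is adjacent in `Hk` to (i.e. disjoint from)
exactly `k + 2` other independent `k`-sets. -/
theorem stmt_3 (k : ℕ) (hk : 3 ≤ k)
    (v : {S : Finset (ZMod (3 * k + 1)) // S.card = k ∧ IsIndep (W (3 * k + 1)) S}) :
    ((Hk (W (3 * k + 1)) k).neighborSet v).ncard = k + 2 := by
  classical
  obtain ⟨a, hS⟩ := SqAux.exists_f hk v.1 v.2.1 v.2.2
  set Good : Finset (ZMod (3*k+1)) := (SqAux.Bad k)ᶜ with hGood
  let g : ZMod (3*k+1) → {S : Finset (ZMod (3*k+1)) // S.card = k ∧ IsIndep (W (3*k+1)) S} :=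
    fun c => ⟨SqAux.f k (a + c), SqAux.card_f hk _, SqAux.indep_f hk _⟩
  have hset : (Hk (W (3*k+1)) k).neighborSet v = ↑(Good.image g) := by
    ext w
    simp only [SimpleGraph.mem_neighborSet, Finset.coe_image, Set.mem_image, Finset.mem_coe]
    constructor
    · intro hadj
      rw [Hk, SimpleGraph.fromRel_adj] at hadj
      obtain ⟨hne, hd⟩ := hadj
      have hdisj : Disjoint v.1 w.1 := by rcases hd with h | h; exacts [h, h.symm]
      obtain ⟨b, hb⟩ := SqAux.exists_f hk w.1 w.2.1 w.2.2
      rw [hS, hb] at hdisj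
      have hgood : b - a ∈ Good := by
        rw [hGood, Finset.mem_compl]
        exact (SqAux.disj_iff hk a b).mp hdisj
      refine ⟨b - a, hgood, ?_⟩
      apply Subtype.ext
      show SqAux.f k (a + (b - a)) = w.1
      rw [show a + (b - a) = b by ring, hb]
    · rintro ⟨c, hc, rfl⟩
      rw [hGood, Finset.mem_compl] at hc
      have hdisj : Disjoint (SqAux.f k a) (SqAux.f k (a + c)) := by
        rw [SqAux.disj_iff hk]
        rw [show a + c - a = c by ring]
        exact hc
      rw [Hk, SimpleGraph.fromRel_adj]
      refine ⟨?_, Or.inl (by rw [hS]; exact hdisj)⟩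
      intro hvw
      have hff : SqAux.f k a = SqAux.f k (a + c) := by
        rw [← hS, hvw]
      rw [← hff] at hdisj
      have h0 : SqAux.f k a = ∅ := by simpa using disjoint_self.mp hdisj
      have hc0 := SqAux.card_f hk a
      rw [h0] at hc0
      simp at hc0
      omega
  rw [hset, Set.ncard_coe_finset]
  rw [Finset.card_image_of_injOn]
  · rw [Finset.card_compl, SqAux.bad_card hk, ZMod.card]
    omega
  · intro c hc c' hc' h
    have := SqAux.f_inj hk (congrArg Subtype.val h)
    exact add_left_cancel this
end

section
/- Let k ≥ 1 and let S be a subset of ZMod (3k+1) with |S| = k. Then S is an independent set of the squared cycle graph W_{3k+1} if and only if there exists a ∈ ZMod (3k+1) such that S = { a + 3·t : t ∈ {0, 1, ..., k-1} }. -/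
/-- For `k ≥ 1`, a `k`-element subset `S` of `ZMod (3k+1)` is an independent set of
the squared cycle graph `W (3k+1)` iff `S = {a, a+3, a+6, …, a+3(k-1)}` for some `a`. -/
theorem stmt_4 (k : ℕ) (hk : 1 ≤ k) (S : Finset (ZMod (3 * k + 1))) (hS : S.card = k) :
    IsIndep (W (3 * k + 1)) S ↔
      ∃ a : ZMod (3 * k + 1),
        S = (Finset.range k).image (fun t : ℕ => a + 3 * (t : ZMod (3 * k + 1))) := by
  have hcast : ∀ x y : ℕ, x < 3 * k + 1 → y < 3 * k + 1 →
      ((x : ZMod (3 * k + 1)) = (y : ZMod (3 * k + 1))) → x = y := by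
    intro x y hx hy h
    have := congrArg ZMod.val h
    rwa [ZMod.val_cast_of_lt hx, ZMod.val_cast_of_lt hy] at this
  have h1 : (1 : ZMod (3 * k + 1)) ≠ 0 := by
    intro h
    have := hcast 1 0 (by omega) (by omega) (by push_cast; exact h)
    omega
  have h2 : (2 : ZMod (3 * k + 1)) ≠ 0 := by
    intro h
    have := hcast 2 0 (by omega) (by omega) (by push_cast; exact h)
    omega
  constructor
  · intro hindep
    have key : ∀ v ∈ S, ∀ w ∈ S, v ≠ w → w - v ≠ 1 ∧ w - v ≠ 2 := by
      intro v hv w hw hvw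
      have h := hindep v hv w hw
      rw [W, SimpleGraph.fromRel_adj] at h
      push_neg at h
      have h' := h hvw
      exact h'.1
    set T : Finset (ZMod (3 * k + 1)) :=
      (S ∪ S.image (· + 1)) ∪ S.image (· + 2) with hT
    have d01 : Disjoint S (S.image (· + 1)) := by
      rw [Finset.disjoint_left]
      rintro x hx hx1
      simp only [Finset.mem_image] at hx1
      obtain ⟨w, hw, rfl⟩ := hx1
      have hne : w ≠ w + 1 := by
        intro h; exact h1 (by linear_combination -h)
      exact (key w hw (w + 1) hx hne).1 (by ring)
    have d02 : Disjoint S (S.image (· + 2)) := by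
      rw [Finset.disjoint_left]
      rintro x hx hx1
      simp only [Finset.mem_image] at hx1
      obtain ⟨w, hw, rfl⟩ := hx1
      have hne : w ≠ w + 2 := by
        intro h; exact h2 (by linear_combination -h)
      exact (key w hw (w + 2) hx hne).2 (by ring)
    have d12 : Disjoint (S.image (· + 1)) (S.image (· + 2)) := by
      rw [Finset.disjoint_left]
      rintro x hx hx1
      simp only [Finset.mem_image] at hx hx1
      obtain ⟨v, hv, rfl⟩ := hx
      obtain ⟨w, hw, hvw⟩ := hx1
      have hvw' : v = w + 1 := by linear_combination -hvw
      have hne : w ≠ v := by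
        intro h; rw [← h] at hvw'; exact h1 (by linear_combination -hvw')
      exact (key w hw v hv hne).1 (by rw [hvw']; ring)
    have dTot : Disjoint (S ∪ S.image (· + 1)) (S.image (· + 2)) := by
      rw [Finset.disjoint_union_left]; exact ⟨d02, d12⟩
    have hinj1 : Function.Injective (· + (1 : ZMod (3 * k + 1))) := add_left_injective 1
    have hinj2 : Function.Injective (· + (2 : ZMod (3 * k + 1))) := add_left_injective 2
    have hTcard : T.card = 3 * k := by
      rw [hT, Finset.card_union_of_disjoint dTot, Finset.card_union_of_disjoint d01,
        Finset.card_image_of_injective _ hinj1, Finset.card_image_of_injective _ hinj2, hS]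
      omega
    have hcompl : Tᶜ.card = 1 := by
      rw [Finset.card_compl, hTcard, ZMod.card]
      omega
    obtain ⟨b, hb⟩ := Finset.card_eq_one.mp hcompl
    have hbT : b ∉ T := by
      have : b ∈ Tᶜ := by rw [hb]; exact Finset.mem_singleton_self b
      exact Finset.mem_compl.mp this
    have hcover : ∀ v : ZMod (3 * k + 1), v ≠ b → v ∈ T := by
      intro v hv
      by_contra h
      have : v ∈ Tᶜ := Finset.mem_compl.mpr h
      rw [hb, Finset.mem_singleton] at this
      exact hv this
    have hbS : b ∉ S := fun h => hbT (by
      rw [hT]; exact Finset.mem_union_left _ (Finset.mem_union_left _ h))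
    have hb1 : b - 1 ∉ S := by
      intro h
      apply hbT
      rw [hT]
      refine Finset.mem_union_left _ (Finset.mem_union_right _ ?_)
      exact Finset.mem_image.mpr ⟨b - 1, h, by ring⟩
    have hb2 : b - 2 ∉ S := by
      intro h
      apply hbT
      rw [hT]
      refine Finset.mem_union_right _ ?_
      exact Finset.mem_image.mpr ⟨b - 2, h, by ring⟩
    have hbase : b + 1 ∈ S := by
      have hne : b + 1 ≠ b := by intro h; exact h1 (by linear_combination h)
      have h := hcover (b + 1) hne
      rw [hT] at h
      simp only [Finset.mem_union, Finset.mem_image] at h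
      rcases h with (h | ⟨w, hw, hweq⟩) | ⟨w, hw, hweq⟩
      · exact h
      · exact absurd (by rw [show w = b by linear_combination hweq] at hw; exact hw) hbS
      · exact absurd (by rw [show w = b - 1 by linear_combination hweq] at hw; exact hw) hb1
    have hstep : ∀ v ∈ S, v + 3 ≠ b → v + 3 ∈ S := by
      intro v hv hne
      have h := hcover (v + 3) hne
      rw [hT] at h
      simp only [Finset.mem_union, Finset.mem_image] at h
      rcases h with (h | ⟨w, hw, hweq⟩) | ⟨w, hw, hweq⟩
      · exact h
      · have hw' : w = v + 2 := by linear_combination hweq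
        have hvw : v ≠ w := by
          intro h; rw [← h] at hw'; exact h2 (by linear_combination -hw')
        exact absurd (by rw [hw']; ring) (key v hv w hw hvw).2
      · have hw' : w = v + 1 := by linear_combination hweq
        have hvw : v ≠ w := by
          intro h; rw [← h] at hw'; exact h1 (by linear_combination -hw')
        exact absurd (by rw [hw']; ring) (key v hv w hw hvw).1
    have hchain : ∀ t : ℕ, t < k → b + 1 + 3 * (t : ZMod (3 * k + 1)) ∈ S := by
      intro t
      induction t with
      | zero => intro _; simpa using hbase
      | succ t ih =>
        intro hlt
        have hprev := ih (by omega)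
        have hne : (b + 1 + 3 * (t : ZMod (3 * k + 1))) + 3 ≠ b := by
          intro h
          have hc : ((3 * t + 4 : ℕ) : ZMod (3 * k + 1)) = ((0 : ℕ) : ZMod (3 * k + 1)) := by
            push_cast
            linear_combination h
          have := hcast _ _ (by omega) (by omega) hc
          omega
        have hmem := hstep _ hprev hne
        have heq : b + 1 + 3 * ((t + 1 : ℕ) : ZMod (3 * k + 1)) =
            (b + 1 + 3 * (t : ZMod (3 * k + 1))) + 3 := by push_cast; ring
        rw [heq]
        exact hmem
    refine ⟨b + 1, ?_⟩
    have hsub : (Finset.range k).image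
        (fun t : ℕ => b + 1 + 3 * (t : ZMod (3 * k + 1))) ⊆ S := by
      intro x hx
      simp only [Finset.mem_image, Finset.mem_range] at hx
      obtain ⟨t, ht, rfl⟩ := hx
      exact hchain t ht
    have hicard : ((Finset.range k).image
        (fun t : ℕ => b + 1 + 3 * (t : ZMod (3 * k + 1)))).card = k := by
      rw [Finset.card_image_of_injOn, Finset.card_range]
      intro t ht s hs h
      simp only [Finset.mem_coe, Finset.mem_range] at ht hs
      have hc : ((3 * t : ℕ) : ZMod (3 * k + 1)) = ((3 * s : ℕ) : ZMod (3 * k + 1)) := by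
        push_cast
        linear_combination h
      have := hcast _ _ (by omega) (by omega) hc
      omega
    exact (Finset.eq_of_subset_of_card_le hsub (by rw [hS, hicard])).symm
  · rintro ⟨a, rfl⟩
    intro v hv w hw hadj
    simp only [Finset.mem_image, Finset.mem_range] at hv hw
    obtain ⟨t, ht, rfl⟩ := hv
    obtain ⟨s, hs, rfl⟩ := hw
    rw [W, SimpleGraph.fromRel_adj] at hadj
    obtain ⟨hne, h⟩ := hadj
    rcases h with (h | h) | (h | h)
    · have hc : ((3 * s : ℕ) : ZMod (3 * k + 1)) = ((3 * t + 1 : ℕ) : ZMod (3 * k + 1)) := by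
        push_cast; linear_combination h
      have := hcast _ _ (by omega) (by omega) hc
      omega
    · have hc : ((3 * s : ℕ) : ZMod (3 * k + 1)) = ((3 * t + 2 : ℕ) : ZMod (3 * k + 1)) := by
        push_cast; linear_combination h
      have := hcast _ _ (by omega) (by omega) hc
      omega
    · have hc : ((3 * t : ℕ) : ZMod (3 * k + 1)) = ((3 * s + 1 : ℕ) : ZMod (3 * k + 1)) := by
        push_cast; linear_combination h
      have := hcast _ _ (by omega) (by omega) hc
      omega
    · have hc : ((3 * t : ℕ) : ZMod (3 * k + 1)) = ((3 * s + 2 : ℕ) : ZMod (3 * k + 1)) := by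
        push_cast; linear_combination h
      have := hcast _ _ (by omega) (by omega) hc
      omega
end

section
/- Let k ≥ 1. The squared cycle graph W_{3k+1} has exactly 3k + 1 independent sets of size k. -/
namespace Stmt5Aux

lemma adj_iff (n : ℕ) (v w : ZMod n) :
    (W n).Adj v w ↔ v ≠ w ∧ (w - v = 1 ∨ w - v = 2 ∨ v - w = 1 ∨ v - w = 2) := by
  simp only [W, SimpleGraph.fromRel_adj]
  tauto

lemma cast_inj (k a b : ℕ) (ha : a < 3*k+1) (hb : b < 3*k+1)
    (h : (a : ZMod (3*k+1)) = b) : a = b := by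
  have h2 := (ZMod.natCast_eq_natCast_iff a b (3*k+1)).mp h
  simpa [Nat.ModEq, Nat.mod_eq_of_lt ha, Nat.mod_eq_of_lt hb] using h2

def f (k : ℕ) (t : ZMod (3*k+1)) : Finset (ZMod (3*k+1)) :=
  (Finset.range k).image (fun i => t + ((3*i : ℕ) : ZMod (3*k+1)))

lemma card_f (k : ℕ) (t : ZMod (3*k+1)) : (f k t).card = k := by
  rw [f, Finset.card_image_of_injOn, Finset.card_range]
  intro i hi j hj hij
  simp only [Finset.mem_coe, Finset.mem_range] at hi hj
  have h1 : ((3*i : ℕ) : ZMod (3*k+1)) = ((3*j : ℕ) : ZMod (3*k+1)) := by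
    have := hij
    field_simp at this
    exact add_left_cancel this
  have := cast_inj k (3*i) (3*j) (by omega) (by omega) h1
  omega

lemma indep_f (k : ℕ) (hk : 1 ≤ k) (t : ZMod (3*k+1)) : IsIndep (W (3*k+1)) (f k t) := by
  have key : ∀ i j : ℕ, i < j → j < k → ¬ (W (3*k+1)).Adj (t + ((3*i:ℕ):ZMod (3*k+1))) (t + ((3*j:ℕ):ZMod (3*k+1))) := by
    intro i j hij hj hadj
    rw [adj_iff] at hadj
    set d := j - i with hd
    have hsplit : ((3*j : ℕ) : ZMod (3*k+1)) = ((3*i : ℕ) : ZMod (3*k+1)) + ((3*d : ℕ) : ZMod (3*k+1)) := by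
      rw [← Nat.cast_add]; congr 1; omega
    have hwv : (t + ((3*j:ℕ):ZMod (3*k+1))) - (t + ((3*i:ℕ):ZMod (3*k+1))) = ((3*d : ℕ) : ZMod (3*k+1)) := by
      rw [hsplit]; ring
    have hd1 : 1 ≤ d := by omega
    have hd2 : d ≤ k - 1 := by omega
    rcases hadj.2 with h | h | h | h
    · rw [hwv] at h
      have := cast_inj k (3*d) 1 (by omega) (by omega) (by exact_mod_cast h)
      omega
    · rw [hwv] at h
      have := cast_inj k (3*d) 2 (by omega) (by omega) (by exact_mod_cast h)
      omega
    · -- v - w = 1, i.e. -(3d) = 1, i.e. 3d + 1 = 0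
      have h0 : ((3*d+1 : ℕ) : ZMod (3*k+1)) = ((0:ℕ) : ZMod (3*k+1)) := by
        push_cast
        have : ((3*d : ℕ) : ZMod (3*k+1)) = -1 := by
          rw [← hwv]; linear_combination -h
        push_cast at this
        linear_combination this
      have := cast_inj k (3*d+1) 0 (by omega) (by omega) h0
      omega
    · have h0 : ((3*d+2 : ℕ) : ZMod (3*k+1)) = ((0:ℕ) : ZMod (3*k+1)) := by
        push_cast
        have : ((3*d : ℕ) : ZMod (3*k+1)) = -2 := by
          rw [← hwv]; linear_combination -h
        push_cast at this
        linear_combination this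
      have := cast_inj k (3*d+2) 0 (by omega) (by omega) h0
      omega
  intro v hv w hw hadj
  rw [f, Finset.mem_image] at hv hw
  obtain ⟨i, hi, rfl⟩ := hv
  obtain ⟨j, hj, rfl⟩ := hw
  rw [Finset.mem_range] at hi hj
  rcases lt_trichotomy i j with h | h | h
  · exact key i j h hj hadj
  · subst h; exact (W (3*k+1)).irrefl hadj
  · exact key j i h hi hadj.symm

lemma structureC (k : ℕ) (hk : 1 ≤ k) (S : Finset (ZMod (3*k+1)))
    (hcard : S.card = k) (hind : IsIndep (W (3*k+1)) S) : ∃ t, S = f k t := by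
  haveI : NeZero (3*k+1) := ⟨by omega⟩
  have hone : (1 : ZMod (3*k+1)) ≠ 0 := by
    intro h
    have := cast_inj k 1 0 (by omega) (by omega) (by exact_mod_cast h)
    omega
  have htwo : (2 : ZMod (3*k+1)) ≠ 0 := by
    intro h
    have := cast_inj k 2 0 (by omega) (by omega) (by exact_mod_cast h)
    omega
  -- adjacency from difference 1 or 2
  have adj1 : ∀ u v : ZMod (3*k+1), v - u = 1 → (W (3*k+1)).Adj u v := by
    intro u v h
    rw [adj_iff]
    refine ⟨fun he => ?_, Or.inl h⟩
    rw [he, sub_self] at h; exact hone h.symm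
  have adj2 : ∀ u v : ZMod (3*k+1), v - u = 2 → (W (3*k+1)).Adj u v := by
    intro u v h
    rw [adj_iff]
    refine ⟨fun he => ?_, Or.inr (Or.inl h)⟩
    rw [he, sub_self] at h; exact htwo h.symm
  set S1 := S.image (· + 1) with hS1
  set S2 := S.image (· + 2) with hS2
  set T := S ∪ S1 ∪ S2 with hT
  have hd01 : Disjoint S S1 := by
    rw [Finset.disjoint_left]
    intro x hx hx1
    rw [hS1, Finset.mem_image] at hx1
    obtain ⟨u, hu, rfl⟩ := hx1
    exact hind u hu (u+1) hx (adj1 u (u+1) (by ring))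
  have hd02 : Disjoint S S2 := by
    rw [Finset.disjoint_left]
    intro x hx hx2
    rw [hS2, Finset.mem_image] at hx2
    obtain ⟨u, hu, rfl⟩ := hx2
    exact hind u hu (u+2) hx (adj2 u (u+2) (by ring))
  have hd12 : Disjoint S1 S2 := by
    rw [Finset.disjoint_left]
    intro x hx1 hx2
    rw [hS1, Finset.mem_image] at hx1
    rw [hS2, Finset.mem_image] at hx2
    obtain ⟨u, hu, rfl⟩ := hx1
    obtain ⟨v, hv, hvv⟩ := hx2
    have : u = v + 1 := by linear_combination -hvv
    subst this
    exact hind v hv (v+1) hu (adj1 v (v+1) (by ring))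
  have hcard1 : S1.card = k := by
    rw [hS1, Finset.card_image_of_injective _ (add_left_injective 1), hcard]
  have hcard2 : S2.card = k := by
    rw [hS2, Finset.card_image_of_injective _ (add_left_injective 2), hcard]
  have hcardT : T.card = 3*k := by
    rw [hT, Finset.card_union_of_disjoint, Finset.card_union_of_disjoint hd01, hcard, hcard1, hcard2]
    · omega
    · exact Finset.disjoint_union_left.mpr ⟨hd02, hd12⟩
  have hcardc : Tᶜ.card = 1 := by
    rw [Finset.card_compl, hcardT, ZMod.card]
    omega
  obtain ⟨m, hm⟩ := Finset.card_eq_one.mp hcardc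
  have hmT : m ∉ T := by
    have : m ∈ Tᶜ := by rw [hm]; exact Finset.mem_singleton_self m
    exact Finset.mem_compl.mp this
  have hmem : ∀ x : ZMod (3*k+1), x ≠ m → x ∈ T := by
    intro x hx
    by_contra h
    have : x ∈ Tᶜ := Finset.mem_compl.mpr h
    rw [hm, Finset.mem_singleton] at this
    exact hx this
  -- Claim 2: s ∈ S, s + 3 ≠ m → s + 3 ∈ S
  have claim2 : ∀ s ∈ S, s + 3 ≠ m → s + 3 ∈ S := by
    intro s hs hne
    have h3 := hmem (s+3) hne
    rw [hT, Finset.mem_union, Finset.mem_union] at h3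
    rcases h3 with (h | h) | h
    · exact h
    · rw [hS1, Finset.mem_image] at h
      obtain ⟨u, hu, huv⟩ := h
      have : u = s + 2 := by linear_combination huv
      subst this
      exact absurd (adj2 s (s+2) (by ring)) (hind s hs (s+2) hu)
    · rw [hS2, Finset.mem_image] at h
      obtain ⟨u, hu, huv⟩ := h
      have : u = s + 1 := by linear_combination huv
      subst this
      exact absurd (adj1 s (s+1) (by ring)) (hind s hs (s+1) hu)
  -- Claim 1 : m + 1 ∈ S
  have claim1 : m + 1 ∈ S := by
    have hne : m + 1 ≠ m := by
      intro h
      exact hone (by linear_combination h)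
    have h1 := hmem (m+1) hne
    rw [hT, Finset.mem_union, Finset.mem_union] at h1
    rcases h1 with (h | h) | h
    · exact h
    · rw [hS1, Finset.mem_image] at h
      obtain ⟨u, hu, huv⟩ := h
      have : u = m := by linear_combination huv
      subst this
      exact absurd (Finset.mem_union_left _ (Finset.mem_union_left _ hu)) hmT
    · rw [hS2, Finset.mem_image] at h
      obtain ⟨u, hu, huv⟩ := h
      have hmu : m = u + 1 := by linear_combination -huv
      have : m ∈ S1 := by
        rw [hS1, Finset.mem_image]; exact ⟨u, hu, hmu.symm⟩
      exact absurd (Finset.mem_union_left _ (Finset.mem_union_right _ this)) hmT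
  -- induction: m + 1 + 3i ∈ S for i < k
  have main : ∀ i, i < k → m + 1 + ((3*i : ℕ) : ZMod (3*k+1)) ∈ S := by
    intro i
    induction i with
    | zero => intro _; simpa using claim1
    | succ i ih =>
      intro hik
      have hi : i < k := by omega
      have hprev := ih hi
      have hne : (m + 1 + ((3*i : ℕ) : ZMod (3*k+1))) + 3 ≠ m := by
        intro h
        have h0 : ((3*i+4 : ℕ) : ZMod (3*k+1)) = ((0:ℕ) : ZMod (3*k+1)) := by
          push_cast at h ⊢
          linear_combination h
        have := cast_inj k (3*i+4) 0 (by omega) (by omega) h0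
        omega
      have := claim2 _ hprev hne
      have heq : (m + 1 + ((3*i : ℕ) : ZMod (3*k+1))) + 3 = m + 1 + ((3*(i+1) : ℕ) : ZMod (3*k+1)) := by
        push_cast; ring
      rwa [heq] at this
  refine ⟨m + 1, ?_⟩
  have hsub : f k (m+1) ⊆ S := by
    intro x hx
    rw [f, Finset.mem_image] at hx
    obtain ⟨i, hi, rfl⟩ := hx
    exact main i (Finset.mem_range.mp hi)
  have hcf : (f k (m+1)).card = k := by
    rw [f, Finset.card_image_of_injOn, Finset.card_range]
    intro i hi j hj hij
    simp only [Finset.mem_coe, Finset.mem_range] at hi hj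
    have h1 : ((3*i : ℕ) : ZMod (3*k+1)) = ((3*j : ℕ) : ZMod (3*k+1)) := by
      have : (m+1) + ((3*i : ℕ) : ZMod (3*k+1)) = (m+1) + ((3*j : ℕ) : ZMod (3*k+1)) := hij
      exact add_left_cancel this
    have := cast_inj k (3*i) (3*j) (by omega) (by omega) h1
    omega
  exact (Finset.eq_of_subset_of_card_le hsub (by omega)).symm


lemma f_inj (k : ℕ) (hk : 1 ≤ k) : Function.Injective (f k) := by
  intro t t' h
  have ht' : t' ∈ f k t' := by
    rw [f, Finset.mem_image]
    exact ⟨0, Finset.mem_range.mpr (by omega), by simp⟩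
  have ht : t ∈ f k t := by
    rw [f, Finset.mem_image]
    exact ⟨0, Finset.mem_range.mpr (by omega), by simp⟩
  rw [← h] at ht'
  rw [h] at ht
  rw [f, Finset.mem_image] at ht ht'
  obtain ⟨i, hi, hit⟩ := ht'
  obtain ⟨j, hj, hjt⟩ := ht
  rw [Finset.mem_range] at hi hj
  have hsum : ((3*i + 3*j : ℕ) : ZMod (3*k+1)) = ((0 : ℕ) : ZMod (3*k+1)) := by
    push_cast
    have h1 : t + ((3*i:ℕ) : ZMod (3*k+1)) = t' := hit
    have h2 : t' + ((3*j:ℕ) : ZMod (3*k+1)) = t := hjt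
    push_cast at h1 h2
    linear_combination h1 + h2
  have hmod := (ZMod.natCast_eq_natCast_iff _ _ _).mp hsum
  have hdvd : (3*k+1) ∣ (3*i + 3*j) := (Nat.modEq_zero_iff_dvd).mp hmod
  obtain ⟨c, hc⟩ := hdvd
  have hc1 : c ≤ 1 := by
    by_contra hc2
    have : (3*k+1) * 2 ≤ (3*k+1) * c := Nat.mul_le_mul_left _ (by omega)
    omega
  have hi0 : i = 0 := by interval_cases c <;> omega
  subst hi0
  simpa using hit

theorem stmt5_aux (k : ℕ) (hk : 1 ≤ k) :
    {S : Finset (ZMod (3 * k + 1)) | S.card = k ∧ IsIndep (W (3 * k + 1)) S}.ncard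
      = 3 * k + 1 := by
  haveI : NeZero (3*k+1) := ⟨by omega⟩
  have hset : {S : Finset (ZMod (3 * k + 1)) | S.card = k ∧ IsIndep (W (3 * k + 1)) S}
      = ↑(Finset.univ.image (f k)) := by
    ext S
    simp only [Set.mem_setOf_eq, Finset.coe_image, Finset.coe_univ, Set.image_univ,
      Set.mem_range]
    constructor
    · rintro ⟨h1, h2⟩
      obtain ⟨t, ht⟩ := structureC k hk S h1 h2
      exact ⟨t, ht.symm⟩
    · rintro ⟨t, rfl⟩
      exact ⟨card_f k t, indep_f k hk t⟩
  rw [hset, Set.ncard_coe_finset, Finset.card_image_of_injective _ (f_inj k hk),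
    Finset.card_univ, ZMod.card]

end Stmt5Aux

/-- For `k ≥ 1`, the squared cycle graph `W (3k+1)` has exactly `3k + 1` independent
sets of size `k`. -/
theorem stmt_5 (k : ℕ) (hk : 1 ≤ k) :
    {S : Finset (ZMod (3 * k + 1)) | S.card = k ∧ IsIndep (W (3 * k + 1)) S}.ncard
      = 3 * k + 1 := Stmt5Aux.stmt5_aux k hk
end

section
/- Let k ≥ 1. The independence number of the squared cycle graph W_{3k+1} (the maximum size of an independent set of vertices) equals k. -/
/-- For `k ≥ 1`, the independence number of the squared cycle graph `W (3k+1)`, i.e.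
the maximum size of an independent set of vertices, equals `k`. -/
theorem stmt_6 (k : ℕ) (hk : 1 ≤ k) :
    IsGreatest {m : ℕ | ∃ S : Finset (ZMod (3 * k + 1)),
      S.card = m ∧ IsIndep (W (3 * k + 1)) S} k := by
  have hn : (3*k+1) ≠ 0 := by omega
  haveI : NeZero (3*k+1) := ⟨hn⟩
  haveI : Fact (1 < 3*k+1) := ⟨by omega⟩
  constructor
  · -- k is achieved
    have key : ∀ a b c : ℕ, a < k → b < k → (c = 1 ∨ c = 2) →
        ((3*b : ℕ) : ZMod (3*k+1)) - ((3*a : ℕ) : ZMod (3*k+1)) = (c : ZMod (3*k+1)) →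
        False := by
      intro a b c ha hb hc heq
      have h2 : ((3*b : ℕ) : ZMod (3*k+1)) = ((3*a + c : ℕ) : ZMod (3*k+1)) := by
        push_cast at heq ⊢
        linear_combination heq
      have h3 := (ZMod.natCast_eq_natCast_iff _ _ _).mp h2
      have h4 : (3*b) % (3*k+1) = (3*a + c) % (3*k+1) := h3
      rw [Nat.mod_eq_of_lt (by omega), Nat.mod_eq_of_lt (by omega)] at h4
      omega
    refine ⟨(Finset.range k).image (fun i => ((3*i : ℕ) : ZMod (3*k+1))), ?_, ?_⟩
    · rw [Finset.card_image_of_injOn, Finset.card_range]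
      intro i hi j hj hij
      simp only [Finset.coe_range, Set.mem_Iio] at hi hj
      have h1 := (ZMod.natCast_eq_natCast_iff _ _ _).mp hij
      have h2 : (3*i) % (3*k+1) = (3*j) % (3*k+1) := h1
      rw [Nat.mod_eq_of_lt (by omega), Nat.mod_eq_of_lt (by omega)] at h2
      omega
    · intro v hv w hw hadj
      simp only [Finset.mem_image, Finset.mem_range] at hv hw
      obtain ⟨i, hi, rfl⟩ := hv
      obtain ⟨j, hj, rfl⟩ := hw
      rw [W, SimpleGraph.fromRel_adj] at hadj
      obtain ⟨hne, h⟩ := hadj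
      rcases h with (h | h) | (h | h)
      · exact key i j 1 hi hj (Or.inl rfl) (by rw [h]; norm_num)
      · exact key i j 2 hi hj (Or.inr rfl) (by rw [h]; norm_num)
      · exact key j i 1 hj hi (Or.inl rfl) (by rw [h]; norm_num)
      · exact key j i 2 hj hi (Or.inr rfl) (by rw [h]; norm_num)
  · -- upper bound
    rintro m ⟨S, hcard, hind⟩
    have hkey : ∀ s ∈ S, ∀ t ∈ S, s - t ≠ 1 ∧ s - t ≠ 2 := by
      intro s hs t ht
      constructor
      · intro h
        by_cases hst : t = s
        · rw [hst, sub_self] at h; exact one_ne_zero h.symm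
        · refine hind t ht s hs ?_
          rw [W, SimpleGraph.fromRel_adj]
          exact ⟨hst, Or.inl (Or.inl h)⟩
      · intro h
        by_cases hst : t = s
        · rw [hst, sub_self] at h
          have : ((2:ℕ) : ZMod (3*k+1)) = 0 := by exact_mod_cast h.symm
          rw [ZMod.natCast_eq_zero_iff] at this
          have := Nat.le_of_dvd (by norm_num) this
          omega
        · refine hind t ht s hs ?_
          rw [W, SimpleGraph.fromRel_adj]
          exact ⟨hst, Or.inl (Or.inr h)⟩
    set S1 := S.image (· + 1) with hS1
    set S2 := S.image (· + 2) with hS2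
    have hd1 : Disjoint S S1 := by
      rw [Finset.disjoint_left]
      intro x hx hx1
      rw [hS1, Finset.mem_image] at hx1
      obtain ⟨s, hs, rfl⟩ := hx1
      exact (hkey _ hx _ hs).1 (by ring)
    have hd2 : Disjoint S S2 := by
      rw [Finset.disjoint_left]
      intro x hx hx2
      rw [hS2, Finset.mem_image] at hx2
      obtain ⟨s, hs, rfl⟩ := hx2
      exact (hkey _ hx _ hs).2 (by ring)
    have hd12 : Disjoint S1 S2 := by
      rw [Finset.disjoint_left]
      intro x hx1 hx2
      rw [hS1, Finset.mem_image] at hx1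
      rw [hS2, Finset.mem_image] at hx2
      obtain ⟨s, hs, rfl⟩ := hx1
      obtain ⟨t, ht, hts⟩ := hx2
      exact (hkey _ hs _ ht).1 (by linear_combination -hts)
    have hinj1 : S1.card = S.card := Finset.card_image_of_injective _ (add_left_injective 1)
    have hinj2 : S2.card = S.card := Finset.card_image_of_injective _ (add_left_injective 2)
    have hunion : (S ∪ S1 ∪ S2).card = 3 * S.card := by
      rw [Finset.card_union_of_disjoint, Finset.card_union_of_disjoint hd1, hinj1, hinj2]
      · ring
      · exact Finset.disjoint_union_left.mpr ⟨hd2, hd12⟩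
    have hle : (S ∪ S1 ∪ S2).card ≤ 3*k+1 := by
      have := Finset.card_le_univ (S ∪ S1 ∪ S2)
      simpa [ZMod.card] using this
    omega
end

section
/- Let n ≥ 3 be odd and let S be a subset of the vertex set of the circular ladder graph CL_n with |S| = n - 1. Then S is an independent set of CL_n if and only if there exist i ∈ ZMod n and ε ∈ Bool such that S = { (i + j, c_j) : 1 ≤ j ≤ n - 1 }, where c_j = ε when j is even and c_j = ¬ε when j is odd. In particular, CL_n has exactly 2n independent sets of size n - 1. -/
lemma cl_adj {n : ℕ} {v w : ZMod n × Bool} :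
    (CL n).Adj v w ↔ v ≠ w ∧
      ((v.2 = w.2 ∧ (w.1 = v.1 + 1 ∨ w.1 = v.1 - 1)) ∨ (v.1 = w.1 ∧ v.2 ≠ w.2)) := by
  show (SimpleGraph.fromRel _).Adj v w ↔ _
  rw [SimpleGraph.fromRel_adj]
  constructor
  · rintro ⟨hne, h | h⟩
    · exact ⟨hne, h⟩
    · rcases h with ⟨hb, hi | hi⟩ | ⟨hi, hb⟩
      · exact ⟨hne, Or.inl ⟨hb.symm, Or.inr (by rw [hi]; ring)⟩⟩
      · exact ⟨hne, Or.inl ⟨hb.symm, Or.inl (by rw [hi]; ring)⟩⟩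
      · exact ⟨hne, Or.inr ⟨hi.symm, Ne.symm hb⟩⟩
  · rintro ⟨hne, h⟩
    exact ⟨hne, Or.inl h⟩

lemma cast_inj_lt {n : ℕ} (hn : 0 < n) {a b : ℕ} (ha : a < n) (hb : b < n)
    (h : (a : ZMod n) = b) : a = b := by
  haveI : NeZero n := ⟨hn.ne'⟩
  have h2 := congrArg ZMod.val h
  rwa [ZMod.val_cast_of_lt ha, ZMod.val_cast_of_lt hb] at h2

def spiral (n : ℕ) (i : ZMod n) (ε : Bool) : Finset (ZMod n × Bool) :=
  (Finset.Icc 1 (n - 1)).image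
    (fun j : ℕ => ((i + (j : ZMod n), if Even j then ε else !ε)))

lemma mem_spiral {n : ℕ} {i : ZMod n} {ε : Bool} {v : ZMod n × Bool} :
    v ∈ spiral n i ε ↔
      ∃ j : ℕ, 1 ≤ j ∧ j ≤ n - 1 ∧ v = (i + (j : ZMod n), if Even j then ε else !ε) := by
  simp only [spiral, Finset.mem_image, Finset.mem_Icc]
  constructor
  · rintro ⟨j, ⟨h1, h2⟩, rfl⟩; exact ⟨j, h1, h2, rfl⟩
  · rintro ⟨j, h1, h2, rfl⟩; exact ⟨j, ⟨h1, h2⟩, rfl⟩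

lemma spiral_card {n : ℕ} (hn : 0 < n) (i : ZMod n) (ε : Bool) :
    (spiral n i ε).card = n - 1 := by
  rw [spiral, Finset.card_image_of_injOn, Nat.card_Icc]
  · omega
  · intro a ha b hb h
    simp only [Finset.coe_Icc, Set.mem_Icc] at ha hb
    have h1 := congrArg Prod.fst h
    simp only at h1
    have h2 : (a : ZMod n) = b := by
      have := add_left_cancel h1
      exact this
    exact cast_inj_lt hn (by omega) (by omega) h2

lemma succ_col {n : ℕ} (hn : 0 < n) {j k : ℕ} (hj1 : 1 ≤ j) (hj2 : j ≤ n - 1)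
    (hk1 : 1 ≤ k) (hk2 : k ≤ n - 1)
    (h : (k : ZMod n) = ((j + 1 : ℕ) : ZMod n)) : k = j + 1 := by
  by_cases hc : j + 1 < n
  · exact cast_inj_lt hn (by omega) hc h
  · have hj : j + 1 = n := by omega
    rw [hj, ZMod.natCast_self] at h
    have : k = 0 := cast_inj_lt hn (by omega) hn (by rw [h]; simp)
    omega

lemma spiral_indep {n : ℕ} (hn : 0 < n) (i : ZMod n) (ε : Bool) :
    IsIndep (CL n) (spiral n i ε) := by
  intro v hv w hw hadj
  rw [mem_spiral] at hv hw
  obtain ⟨j, hj1, hj2, rfl⟩ := hv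
  obtain ⟨k, hk1, hk2, rfl⟩ := hw
  rw [cl_adj] at hadj
  obtain ⟨hne, ⟨hb, hcol | hcol⟩ | ⟨hcol, hb⟩⟩ := hadj
  · -- k = j + 1 case
    simp only at hb hcol
    have hk : (k : ZMod n) = ((j + 1 : ℕ) : ZMod n) := by
      have h' : i + (k : ZMod n) = i + ((j : ZMod n) + 1) := by linear_combination hcol
      have h2 := add_left_cancel h'
      rw [h2]; push_cast; ring
    have := succ_col hn hj1 hj2 hk1 hk2 hk
    subst this
    rcases Nat.even_or_odd j with he | ho
    · rw [if_pos he, if_neg (by simp [Nat.even_add_one, he])] at hb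
      simp at hb
    · rw [if_neg (Nat.not_even_iff_odd.2 ho),
        if_pos (Nat.even_add_one.2 (Nat.not_even_iff_odd.2 ho))] at hb
      simp at hb
  · -- j = k + 1 case
    simp only at hb hcol
    have hj : (j : ZMod n) = ((k + 1 : ℕ) : ZMod n) := by
      have h' : i + (j : ZMod n) = i + ((k : ZMod n) + 1) := by linear_combination -hcol
      have h2 := add_left_cancel h'
      rw [h2]; push_cast; ring
    have := succ_col hn hk1 hk2 hj1 hj2 hj
    subst this
    rcases Nat.even_or_odd k with he | ho
    · rw [if_pos he, if_neg (by simp [Nat.even_add_one, he])] at hb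
      simp at hb
    · rw [if_neg (Nat.not_even_iff_odd.2 ho),
        if_pos (Nat.even_add_one.2 (Nat.not_even_iff_odd.2 ho))] at hb
      simp at hb
  · -- same column
    simp only at hb hcol
    have : (j : ZMod n) = k := add_left_cancel hcol
    have := cast_inj_lt hn (by omega) (by omega) this
    subst this
    exact hb rfl

lemma indep_eq_spiral {n : ℕ} (hn3 : 3 ≤ n) {S : Finset (ZMod n × Bool)}
    (hcard : S.card = n - 1) (hind : IsIndep (CL n) S) :
    ∃ (i : ZMod n) (ε : Bool), S = spiral n i ε := by
  have hn : 0 < n := by omega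
  haveI : NeZero n := ⟨hn.ne'⟩
  -- at most one vertex per column
  have hA : ∀ a : ZMod n, ¬ ((a, true) ∈ S ∧ (a, false) ∈ S) := by
    rintro a ⟨h1, h2⟩
    exact hind _ h1 _ h2 (cl_adj.2 ⟨by simp, Or.inr ⟨rfl, by simp⟩⟩)
  have hinj : Set.InjOn Prod.fst (S : Set (ZMod n × Bool)) := by
    intro s hs t ht h
    by_contra hne
    exact hind s (Finset.mem_coe.1 hs) t (Finset.mem_coe.1 ht) (cl_adj.2 ⟨hne, Or.inr ⟨h, fun h2 => hne (Prod.ext h h2)⟩⟩)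
  have himg : (S.image Prod.fst).card = n - 1 := by
    rw [Finset.card_image_of_injOn hinj, hcard]
  have hcompl : (S.image Prod.fst)ᶜ.card = 1 := by
    rw [Finset.card_compl, himg, ZMod.card]
    omega
  obtain ⟨i, hi⟩ := Finset.card_eq_one.1 hcompl
  have hmem_col : ∀ a : ZMod n, a ≠ i → ∃ s ∈ S, s.1 = a := by
    intro a ha
    have : a ∈ S.image Prod.fst := by
      by_contra h
      have : a ∈ (S.image Prod.fst)ᶜ := Finset.mem_compl.2 h
      rw [hi, Finset.mem_singleton] at this
      exact ha this
    obtain ⟨s, hs, hfst⟩ := Finset.mem_image.1 this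
    exact ⟨s, hs, hfst⟩
  have hcast_ne : ∀ j : ℕ, 1 ≤ j → j ≤ n - 1 → (j : ZMod n) ≠ 0 := by
    intro j h1 h2 h
    have : j = 0 := cast_inj_lt hn (by omega) hn (by rw [h]; simp)
    omega
  set b : ℕ → Bool := fun j => decide ((i + (j : ZMod n), true) ∈ S) with hbdef
  have hbmem : ∀ j : ℕ, 1 ≤ j → j ≤ n - 1 → (i + (j : ZMod n), b j) ∈ S := by
    intro j h1 h2
    obtain ⟨⟨s1, s2⟩, hs, hfst⟩ := hmem_col (i + (j : ZMod n))
      (fun h => hcast_ne j h1 h2 (by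
        have := h
        rwa [add_eq_left] at this))
    simp only at hfst
    subst hfst
    by_cases hT : (i + (j : ZMod n), true) ∈ S
    · simp only [hbdef, decide_eq_true hT]
      exact hT
    · cases s2 with
      | true => exact absurd hs hT
      | false =>
        simp only [hbdef, decide_eq_false hT]
        exact hs
  have halt : ∀ j : ℕ, 1 ≤ j → j + 1 ≤ n - 1 → b (j + 1) = !(b j) := by
    intro j h1 h2
    have m1 := hbmem j h1 (by omega)
    have m2 := hbmem (j + 1) (by omega) h2
    by_contra hne'
    have heq : b (j + 1) = b j := by
      revert hne'
      cases b j <;> cases b (j + 1) <;> simp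
    have hfst : i + ((j + 1 : ℕ) : ZMod n) = i + (j : ZMod n) + 1 := by
      push_cast; ring
    have hvne : (i + (j : ZMod n), b j) ≠ (i + ((j + 1 : ℕ) : ZMod n), b (j + 1)) := by
      intro h
      have := congrArg Prod.fst h
      simp only at this
      have h2' : (j : ZMod n) = ((j + 1 : ℕ) : ZMod n) := add_left_cancel this
      have := cast_inj_lt hn (by omega) (by omega) h2'
      omega
    exact hind _ m1 _ m2 (cl_adj.2 ⟨hvne, Or.inl ⟨heq.symm, Or.inl hfst⟩⟩)
  set ε : Bool := !(b 1) with hε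
  have hval : ∀ j : ℕ, 1 ≤ j → j ≤ n - 1 → b j = if Even j then ε else !ε := by
    intro j
    induction j with
    | zero => omega
    | succ k ih =>
      intro h1 h2
      by_cases hk : k = 0
      · subst hk
        rw [if_neg (by decide : ¬ Even 1), hε, Bool.not_not]
      · rw [halt k (by omega) h2, ih (by omega) (by omega)]
        rcases Nat.even_or_odd k with he | ho
        · rw [if_pos he, if_neg (by simp [Nat.even_add_one, he])]
        · rw [if_neg (Nat.not_even_iff_odd.2 ho),
            if_pos (Nat.even_add_one.2 (Nat.not_even_iff_odd.2 ho)), Bool.not_not]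
  refine ⟨i, ε, ?_⟩
  have hsub : spiral n i ε ⊆ S := by
    intro v hv
    rw [mem_spiral] at hv
    obtain ⟨j, h1, h2, rfl⟩ := hv
    rw [← hval j h1 h2]
    exact hbmem j h1 h2
  exact (Finset.eq_of_subset_of_card_le hsub
    (le_of_eq (by rw [hcard, spiral_card hn]))).symm

lemma spiral_injective {n : ℕ} (hn3 : 3 ≤ n) :
    Function.Injective (fun p : ZMod n × Bool => spiral n p.1 p.2) := by
  have hn : 0 < n := by omega
  haveI : NeZero n := ⟨hn.ne'⟩
  rintro ⟨i, ε⟩ ⟨i', ε'⟩ h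
  simp only at h
  have hii : i = i' := by
    by_contra hne
    have hval1 : 1 ≤ (i' - i).val := by
      have : i' - i ≠ 0 := sub_ne_zero.mpr (Ne.symm hne)
      have := (ZMod.val_eq_zero _).not.2 this
      omega
    have hval2 : (i' - i).val ≤ n - 1 := by
      have := ZMod.val_lt (i' - i)
      omega
    have h1 : (i', if Even ((i' - i).val) then ε else !ε) ∈ spiral n i ε := by
      rw [mem_spiral]
      refine ⟨(i' - i).val, hval1, hval2, ?_⟩
      have : i + (((i' - i).val : ℕ) : ZMod n) = i' := by
        rw [ZMod.natCast_val, ZMod.cast_id]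
        ring
      rw [this]
    rw [h, mem_spiral] at h1
    obtain ⟨k, hk1, hk2, heq⟩ := h1
    have hfst := congrArg Prod.fst heq
    simp only at hfst
    have : (k : ZMod n) = 0 := by
      have := hfst
      rw [left_eq_add] at this
      exact this
    have : k = 0 := cast_inj_lt hn (by omega) hn (by rw [this]; simp)
    omega
  subst hii
  have h2 : (i + ((2 : ℕ) : ZMod n), ε) ∈ spiral n i ε := by
    rw [mem_spiral]
    exact ⟨2, by omega, by omega, by norm_num⟩
  rw [h, mem_spiral] at h2
  obtain ⟨k, hk1, hk2, heq⟩ := h2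
  have hfst := congrArg Prod.fst heq
  have hsnd := congrArg Prod.snd heq
  simp only at hfst hsnd
  have hk : k = 2 := by
    have h2k : ((2 : ℕ) : ZMod n) = (k : ZMod n) := add_left_cancel hfst
    exact (cast_inj_lt hn (by omega) (by omega) h2k).symm
  subst hk
  rw [if_pos (by decide : Even 2)] at hsnd
  rw [hsnd]

/-- For odd `n ≥ 3`: an `(n-1)`-set `S` of vertices of `CL n` is independent iff
`S = {(i + j, c_j) : 1 ≤ j ≤ n - 1}` for some `i ∈ ZMod n` and `ε : Bool`, where
`c_j = ε` for even `j` and `c_j = ¬ε` for odd `j`.  In particular, `CL n` has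
exactly `2n` independent sets of size `n - 1`. -/
theorem stmt_7 (n : ℕ) (hn : 3 ≤ n) (hodd : Odd n) :
    (∀ S : Finset (ZMod n × Bool), S.card = n - 1 →
      (IsIndep (CL n) S ↔
        ∃ (i : ZMod n) (ε : Bool),
          S = (Finset.Icc 1 (n - 1)).image
            (fun j : ℕ => ((i + (j : ZMod n), if Even j then ε else !ε))))) ∧
    {S : Finset (ZMod n × Bool) | S.card = n - 1 ∧ IsIndep (CL n) S}.ncard = 2 * n := by
  have hn0 : 0 < n := by omega
  haveI : NeZero n := ⟨hn0.ne'⟩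
  have hmain : ∀ S : Finset (ZMod n × Bool), S.card = n - 1 →
      (IsIndep (CL n) S ↔ ∃ (i : ZMod n) (ε : Bool), S = spiral n i ε) := by
    intro S hcard
    constructor
    · exact fun hind => indep_eq_spiral hn hcard hind
    · rintro ⟨i, ε, rfl⟩
      exact spiral_indep hn0 i ε
  refine ⟨hmain, ?_⟩
  have hrange : {S : Finset (ZMod n × Bool) | S.card = n - 1 ∧ IsIndep (CL n) S}
      = Set.range (fun p : ZMod n × Bool => spiral n p.1 p.2) := by
    ext S
    simp only [Set.mem_setOf_eq, Set.mem_range]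
    constructor
    · rintro ⟨hcard, hind⟩
      obtain ⟨i, ε, rfl⟩ := (hmain S hcard).1 hind
      exact ⟨(i, ε), rfl⟩
    · rintro ⟨⟨i, ε⟩, rfl⟩
      exact ⟨spiral_card hn0 i ε, spiral_indep hn0 i ε⟩
  rw [hrange, ← Set.image_univ, Set.ncard_image_of_injective _ (spiral_injective hn),
    Set.ncard_univ, Nat.card_eq_fintype_card, Fintype.card_prod, ZMod.card,
    Fintype.card_bool]
  ring
end

section
/- Let n ≥ 4 be even, and define A = { (i,b) ∈ ZMod n × Bool : b = true iff the canonical representative of i is even } and B = { (i,b) ∈ ZMod n × Bool : b = true iff the canonical representative of i is odd }. A subset S of the vertices of the circular ladder graph CL_n with |S| = n - 1 is an independent set of CL_n if and only if S ⊆ A or S ⊆ B. -/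
set_option maxHeartbeats 1000000

lemma even_mod_even {n x : ℕ} (hn : Even n) : Even (x % n) ↔ Even x := by
  conv_rhs => rw [← Nat.mod_add_div x n]
  have : Even (n * (x / n)) := hn.mul_right _
  simp [Nat.even_add, this]

lemma adj_iff {n : ℕ} (v w : ZMod n × Bool) : (CL n).Adj v w ↔ v ≠ w ∧
    (((v.2 = w.2 ∧ (w.1 = v.1 + 1 ∨ w.1 = v.1 - 1)) ∨ (v.1 = w.1 ∧ v.2 ≠ w.2)) ∨
     ((w.2 = v.2 ∧ (v.1 = w.1 + 1 ∨ v.1 = w.1 - 1)) ∨ (w.1 = v.1 ∧ w.2 ≠ v.2))) := by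
  simp [CL, SimpleGraph.fromRel_adj]

-- parity of (a+1).val flips
lemma val_succ_parity {n : ℕ} (hn : 4 ≤ n) (he : Even n) (a : ZMod n) :
    Even ((a + 1).val) ↔ ¬ Even a.val := by
  haveI : NeZero n := ⟨by omega⟩
  have h1 : (1 : ZMod n).val = 1 := by
    rw [ZMod.val_one_eq_one_mod]; exact Nat.mod_eq_of_lt (by omega)
  rw [ZMod.val_add, h1, even_mod_even he, Nat.even_add_one]

lemma indep_of_parity {n : ℕ} (hn : 4 ≤ n) (he : Even n) (S : Finset (ZMod n × Bool))
    (f : ℕ → Prop) (hf : ∀ a : ZMod n, f ((a + 1).val) ↔ ¬ f a.val)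
    (h : ∀ p ∈ S, ((p.2 = true) ↔ f p.1.val)) : IsIndep (CL n) S := by
  intro v hv w hw hadj
  rw [adj_iff] at hadj
  obtain ⟨hne, hrel⟩ := hadj
  have hv' := h v hv
  have hw' := h w hw
  have flip : ∀ a b : ZMod n, b = a + 1 → (f b.val ↔ ¬ f a.val) := by
    rintro a b rfl; exact hf a
  have flip' : ∀ a b : ZMod n, b = a - 1 → (f a.val ↔ ¬ f b.val) := by
    rintro a b hb; exact flip b a (by rw [hb]; ring)
  have hbool : ∀ x y : Bool, x = y ↔ ((x = true) ↔ (y = true)) := by decide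
  rcases hrel with (⟨h2, (h3 | h3)⟩ | ⟨h2, h3⟩) | (⟨h2, (h3 | h3)⟩ | ⟨h2, h3⟩)
  · have := flip v.1 w.1 h3; rw [hbool] at h2; tauto
  · have := flip' v.1 w.1 h3; rw [hbool] at h2; tauto
  · have h3' : ¬ (v.2 = true ↔ w.2 = true) := fun hx => h3 ((hbool _ _).2 hx)
    rw [h2] at hv'; tauto
  · have := flip w.1 v.1 h3; rw [hbool] at h2; tauto
  · have := flip' w.1 v.1 h3; rw [hbool] at h2; tauto
  · have h3' : ¬ (w.2 = true ↔ v.2 = true) := fun hx => h3 ((hbool _ _).2 hx)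
    rw [h2] at hw'; tauto

/-- For even `n ≥ 4`, with `A = {(i,b) : b = true ↔ i.val even}` and
`B = {(i,b) : b = true ↔ i.val odd}`: an `(n-1)`-set `S` of vertices of `CL n` is
independent iff `S ⊆ A` or `S ⊆ B`. -/
theorem stmt_8 (n : ℕ) (hn : 4 ≤ n) (heven : Even n)
    (A B : Set (ZMod n × Bool))
    (hA : A = {p : ZMod n × Bool | p.2 = true ↔ Even p.1.val})
    (hB : B = {p : ZMod n × Bool | p.2 = true ↔ Odd p.1.val})
    (S : Finset (ZMod n × Bool)) (hS : S.card = n - 1) :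
    IsIndep (CL n) S ↔ (↑S ⊆ A ∨ ↑S ⊆ B) := by
  haveI : NeZero n := ⟨by omega⟩
  haveI : Fact (1 < n) := ⟨by omega⟩
  have hone : (1 : ZMod n) ≠ 0 := one_ne_zero
  constructor
  · intro hI
    -- at most one vertex per rung
    have hinj : ∀ p ∈ S, ∀ q ∈ S, p.1 = q.1 → p = q := by
      intro p hp q hq h1
      by_contra hne
      apply hI p hp q hq
      rw [adj_iff]
      exact ⟨hne, Or.inl (Or.inr ⟨h1, fun h2 => hne (Prod.ext h1 h2)⟩)⟩
    set T := S.image Prod.fst with hT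
    have hTcard : T.card = n - 1 := by
      rw [hT, Finset.card_image_of_injOn (fun p hp q hq h => hinj p hp q hq h)]
      exact hS
    have hcompl : Tᶜ.card = 1 := by
      have hcn : Fintype.card (ZMod n) = n := ZMod.card n
      rw [Finset.card_compl, hcn, hTcard]; omega
    obtain ⟨i0, hi0⟩ := Finset.card_eq_one.mp hcompl
    have hmem : ∀ i : ZMod n, i ≠ i0 → ∃ b, (i, b) ∈ S := by
      intro i hi
      have hiT : i ∈ T := by
        by_contra hx
        have : i ∈ Tᶜ := Finset.mem_compl.mpr hx
        rw [hi0, Finset.mem_singleton] at this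
        exact hi this
      obtain ⟨p, hp, hp1⟩ := Finset.mem_image.mp hiT
      exact ⟨p.2, by rw [← hp1]; exact hp⟩
    have hi0not : ∀ i : ZMod n, i ∈ T → i ≠ i0 := by
      intro i hiT hii
      have : i ∈ Tᶜ := by rw [hi0, Finset.mem_singleton]; exact hii
      exact Finset.mem_compl.mp this hiT
    -- alternation along rails
    have halt : ∀ (i : ZMod n) (b c : Bool), (i, b) ∈ S → (i + 1, c) ∈ S → c = !b := by
      intro i b c hb hc
      by_contra hbc
      have hcb : c = b := by cases b <;> cases c <;> simp_all
      subst hcb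
      apply hI (i, c) hb (i + 1, c) hc
      rw [adj_iff]
      constructor
      · intro h
        have h1 : i = i + 1 := congrArg Prod.fst h
        exact hone (by linear_combination -h1)
      · exact Or.inl (Or.inl ⟨rfl, Or.inl rfl⟩)
    have hne10 : ∀ m : ℕ, 1 ≤ m → m ≤ n - 1 → i0 + (m : ZMod n) ≠ i0 := by
      intro m h1 h2 h
      have hm0 : (m : ZMod n) = 0 := by linear_combination h
      rw [ZMod.natCast_eq_zero_iff] at hm0
      have := Nat.le_of_dvd (by omega) hm0
      omega
    obtain ⟨b1, hb1⟩ := hmem (i0 + 1) (fun h => hone (by linear_combination h))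
    have key : ∀ k : ℕ, 1 ≤ k → k ≤ n - 1 → ∀ b : Bool, ((i0 + (k : ZMod n), b) ∈ S) →
        ((b = true) ↔ ((b1 = true) ↔ Odd k)) := by
      intro k
      induction k with
      | zero => omega
      | succ m ih =>
        intro h1 h2 b hb
        rcases Nat.eq_or_lt_of_le h1 with h | h
        · have hm : m = 0 := by omega
          subst hm
          have hcast : ((0 + 1 : ℕ) : ZMod n) = 1 := by push_cast; ring
          rw [hcast] at hb
          have := hinj _ hb _ hb1 rfl
          have hbb1 : b = b1 := congrArg Prod.snd this
          subst hbb1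
          simp [Nat.odd_iff]
        · have hm1 : 1 ≤ m := by omega
          obtain ⟨c, hc⟩ := hmem (i0 + (m : ZMod n)) (hne10 m hm1 (by omega))
          have ihc := ih hm1 (by omega) c hc
          have hcast : i0 + ((m + 1 : ℕ) : ZMod n) = (i0 + (m : ZMod n)) + 1 := by
            push_cast; ring
          rw [hcast] at hb
          have hbc : b = !c := halt _ c b hc hb
          have hodd : Odd (m + 1) ↔ ¬ Odd m := Nat.odd_add_one
          have hb' : (b = true) ↔ ¬ (c = true) := by rw [hbc]; cases c <;> simp
          tauto
    -- each element of S determined by parity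
    have main : ∀ p ∈ S, ((p.2 = true) ↔ ((b1 = true) ↔ Odd ((p.1 - i0).val))) ∧
        (Even p.1.val ↔ (Even i0.val ↔ Even ((p.1 - i0).val))) := by
      intro p hp
      have hp1 : p.1 ≠ i0 := hi0not p.1 (Finset.mem_image.mpr ⟨p, hp, rfl⟩)
      set k := (p.1 - i0).val with hk
      have hk1 : 1 ≤ k := by
        rcases Nat.eq_zero_or_pos k with h | h
        · exfalso; apply hp1
          have : p.1 - i0 = 0 := by rwa [← ZMod.val_eq_zero]
          linear_combination this
        · omega
      have hk2 : k ≤ n - 1 := by have := ZMod.val_lt (p.1 - i0); omega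
      have hcast : i0 + (k : ZMod n) = p.1 := by
        rw [hk, ZMod.natCast_zmod_val]; ring
      have hpS : (i0 + (k : ZMod n), p.2) ∈ S := by rw [hcast]; exact hp
      refine ⟨key k hk1 hk2 p.2 hpS, ?_⟩
      have hvk : ((k : ZMod n)).val = k := by
        rw [ZMod.val_natCast, Nat.mod_eq_of_lt (by omega)]
      have : p.1.val = (i0.val + k) % n := by
        rw [← hcast, ZMod.val_add, hvk]
      rw [this, even_mod_even heven, Nat.even_add]
    by_cases hC : (b1 = true) ↔ Odd i0.val
    · left
      intro p hp
      rw [Finset.mem_coe] at hp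
      obtain ⟨h1, h2⟩ := main p hp
      rw [hA, Set.mem_setOf_eq]
      have o1 : Odd ((p.1 - i0).val) ↔ ¬ Even ((p.1 - i0).val) := Nat.not_even_iff_odd.symm
      have o2 : Odd i0.val ↔ ¬ Even i0.val := Nat.not_even_iff_odd.symm
      rw [h1, h2, hC, o1, o2]
      tauto
    · right
      intro p hp
      rw [Finset.mem_coe] at hp
      obtain ⟨h1, h2⟩ := main p hp
      rw [hB, Set.mem_setOf_eq]
      have o1 : Odd ((p.1 - i0).val) ↔ ¬ Even ((p.1 - i0).val) := Nat.not_even_iff_odd.symm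
      have o2 : Odd i0.val ↔ ¬ Even i0.val := Nat.not_even_iff_odd.symm
      have o3 : Odd p.1.val ↔ ¬ Even p.1.val := Nat.not_even_iff_odd.symm
      rw [o2] at hC
      rw [h1, o3, h2, o1]
      tauto
  · rintro (hSA | hSB)
    · apply indep_of_parity hn heven S Even (val_succ_parity hn heven)
      intro p hp
      have := hSA (Finset.mem_coe.mpr hp)
      rwa [hA, Set.mem_setOf_eq] at this
    · apply indep_of_parity hn heven S Odd ?_
      · intro p hp
        have := hSB (Finset.mem_coe.mpr hp)
        rwa [hB, Set.mem_setOf_eq] at this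
      · intro a
        rw [← Nat.not_even_iff_odd, ← Nat.not_even_iff_odd, val_succ_parity hn heven]
end

section
/- Let n ≥ 3. The independence number of the circular ladder graph CL_n (the maximum size of an independent set of vertices) equals n if n is even, and equals n - 1 if n is odd. -/
section Aux

variable {n : ℕ}

lemma val_step (hn : 3 ≤ n) (i : ZMod n) : (i + 1).val = (i.val + 1) % n := by
  haveI : NeZero n := ⟨by omega⟩
  haveI : Fact (1 < n) := ⟨by omega⟩
  rw [ZMod.val_add, ZMod.val_one]

lemma key_parity (hn : 3 ≤ n) (i j : ZMod n) (hi : Even n ∨ i.val ≠ n - 1)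
    (hj : j = i + 1) (hpar : Even i.val ↔ Even j.val) : False := by
  haveI : NeZero n := ⟨by omega⟩
  subst hj
  have h1 := val_step hn i
  have h2 := ZMod.val_lt i
  have h3 : (i + 1).val = i.val + 1 ∨ ((i + 1).val = 0 ∧ i.val = n - 1) := by
    by_cases hlt : i.val + 1 < n
    · left; rw [h1, Nat.mod_eq_of_lt hlt]
    · right
      have he : i.val + 1 = n := by omega
      rw [h1, he, Nat.mod_self]
      omega
  rw [Nat.even_iff, Nat.even_iff] at hpar
  rw [Nat.even_iff] at hi
  omega

lemma not_adj_pp (hn : 3 ≤ n) {i j : ZMod n}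
    (hi : Even n ∨ i.val ≠ n - 1) (hj : Even n ∨ j.val ≠ n - 1) :
    ¬ (CL n).Adj (i, decide (Even i.val)) (j, decide (Even j.val)) := by
  rw [CL, SimpleGraph.fromRel_adj]
  rintro ⟨hne, hrel⟩
  dsimp only at hrel
  have hppar : Even i.val ↔ Even j.val := by
    rcases hrel with (⟨hb, _⟩ | ⟨hij, hb⟩) | (⟨hb, _⟩ | ⟨hij, hb⟩)
    · exact decide_eq_decide.mp hb
    · exact absurd (by rw [hij]) hb
    · exact (decide_eq_decide.mp hb).symm
    · exact absurd (by rw [hij]) hb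
  rcases hrel with (⟨hb, (h1 | h2)⟩ | ⟨hij, hb⟩) | (⟨hb, (h1 | h2)⟩ | ⟨hij, hb⟩)
  · exact key_parity hn i j hi h1 hppar
  · exact key_parity hn j i hj (by rw [h2]; ring) hppar.symm
  · exact hb (by rw [decide_eq_decide]; rw [hij])
  · exact key_parity hn j i hj h1 hppar.symm
  · exact key_parity hn i j hi (by rw [h2]; ring) hppar
  · exact hb (by rw [decide_eq_decide]; rw [hij])

lemma ub_le (hn : 3 ≤ n) (S : Finset (ZMod n × Bool)) (hS : IsIndep (CL n) S) :
    S.card ≤ n := by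
  haveI : NeZero n := ⟨by omega⟩
  have := Finset.card_le_card_of_injOn (s := S) (t := Finset.univ) Prod.fst
    (fun a _ => Finset.mem_univ _) ?_
  · simpa [ZMod.card] using this
  · intro v hv w hw hfst
    by_contra hne
    refine hS v hv w hw ?_
    rw [CL, SimpleGraph.fromRel_adj]
    exact ⟨hne, Or.inl (Or.inr ⟨hfst, fun h => hne (Prod.ext hfst h)⟩)⟩

lemma ub_ne (hn : 3 ≤ n) (hodd : ¬ Even n) (S : Finset (ZMod n × Bool))
    (hS : IsIndep (CL n) S) : S.card ≠ n := by
  haveI : NeZero n := ⟨by omega⟩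
  haveI : Fact (1 < n) := ⟨by omega⟩
  intro hcard
  -- image of fst is everything
  have hinj : Set.InjOn Prod.fst (S : Set (ZMod n × Bool)) := by
    intro v hv w hw hfst
    by_contra hne
    refine hS v hv w hw ?_
    rw [CL, SimpleGraph.fromRel_adj]
    exact ⟨hne, Or.inl (Or.inr ⟨hfst, fun h => hne (Prod.ext hfst h)⟩)⟩
  have himage : S.image Prod.fst = Finset.univ := by
    apply Finset.eq_univ_of_card
    rw [Finset.card_image_of_injOn hinj, hcard, ZMod.card]
  have hex : ∀ i : ZMod n, ∃ b, (i, b) ∈ S := by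
    intro i
    have : i ∈ S.image Prod.fst := himage ▸ Finset.mem_univ i
    obtain ⟨v, hv, hvi⟩ := Finset.mem_image.mp this
    exact ⟨v.2, by rwa [← hvi, Prod.mk.eta]⟩
  set f : ZMod n → Bool := fun i => if (i, true) ∈ S then true else false with hf
  have hfm : ∀ i, (i, f i) ∈ S := by
    intro i
    obtain ⟨b, hb⟩ := hex i
    by_cases h : (i, true) ∈ S
    · simp [hf, h]
    · cases b
      · simp only [hf, if_neg h]; exact hb
      · exact absurd hb h
  have hstep : ∀ i : ZMod n, f (i + 1) = !(f i) := by
    intro i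
    rw [Bool.eq_not_iff]
    intro heq
    refine hS (i, f i) (hfm i) (i + 1, f (i + 1)) (hfm (i + 1)) ?_
    rw [CL, SimpleGraph.fromRel_adj]
    refine ⟨?_, Or.inl (Or.inl ⟨heq.symm, Or.inl rfl⟩)⟩
    intro h
    exact (left_ne_add.mpr (one_ne_zero)) (congrArg Prod.fst h)
  have hF : ∀ k : ℕ, f (k : ZMod n) = if k % 2 = 0 then f 0 else !(f 0) := by
    intro k
    induction k with
    | zero => simp
    | succ k ih =>
      have : ((k + 1 : ℕ) : ZMod n) = (k : ZMod n) + 1 := by push_cast; ring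
      rw [this, hstep, ih]
      rcases Nat.even_or_odd k with h | h
      · rw [Nat.even_iff] at h
        simp [h, Nat.succ_mod_two_eq_one_iff.mpr h]
      · rw [Nat.odd_iff] at h
        simp [h, Nat.succ_mod_two_eq_zero_iff.mpr h]
  have h1 := hF n
  rw [ZMod.natCast_self] at h1
  rw [Nat.even_iff] at hodd
  rw [if_neg (by omega)] at h1
  simp at h1

lemma indep_image (hn : 3 ≤ n) (T : Finset (ZMod n))
    (hT : ∀ i ∈ T, Even n ∨ i.val ≠ n - 1) :
    IsIndep (CL n) (T.image (fun i => (i, decide (Even i.val)))) := by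
  intro v hv w hw
  obtain ⟨i, hi, rfl⟩ := Finset.mem_image.mp hv
  obtain ⟨j, hj, rfl⟩ := Finset.mem_image.mp hw
  exact not_adj_pp hn (hT i hi) (hT j hj)

end Aux

/-- For `n ≥ 3`, the independence number of the circular ladder graph `CL n`
(the maximum size of an independent set) equals `n` when `n` is even, and `n - 1`
when `n` is odd. -/
theorem stmt_9 (n : ℕ) (hn : 3 ≤ n) :
    IsGreatest {m : ℕ | ∃ S : Finset (ZMod n × Bool),
      S.card = m ∧ IsIndep (CL n) S} (if Even n then n else n - 1) := by
  haveI : NeZero n := ⟨by omega⟩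
  have hinj : Function.Injective (fun i : ZMod n => (i, decide (Even i.val))) := by
    intro a b h
    simpa using congrArg Prod.fst h
  by_cases hE : Even n
  · rw [if_pos hE]
    constructor
    · refine ⟨Finset.univ.image (fun i => (i, decide (Even i.val))), ?_, ?_⟩
      · rw [Finset.card_image_of_injective _ hinj, Finset.card_univ, ZMod.card]
      · exact indep_image hn _ (fun i _ => Or.inl hE)
    · rintro m ⟨S, rfl, hS⟩
      exact ub_le hn S hS
  · rw [if_neg hE]
    constructor
    · refine ⟨(Finset.univ.erase (-1 : ZMod n)).image (fun i => (i, decide (Even i.val))), ?_, ?_⟩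
      · rw [Finset.card_image_of_injective _ hinj, Finset.card_erase_of_mem (Finset.mem_univ _),
          Finset.card_univ, ZMod.card]
      · refine indep_image hn _ (fun i hi => Or.inr ?_)
        intro hval
        have hi1 : i ≠ -1 := (Finset.mem_erase.mp hi).1
        apply hi1
        have : (i + 1).val = 0 := by
          rw [val_step hn i, hval]
          have he : n - 1 + 1 = n := by omega
          rw [he, Nat.mod_self]
        have h0 : i + 1 = 0 := by
          rwa [ZMod.val_eq_zero] at this
        linear_combination h0
    · rintro m ⟨S, rfl, hS⟩
      have h1 := ub_le hn S hS
      have h2 := ub_ne hn hE S hS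
      omega
end

section
/- Let n ≥ 3 and 1 ≤ k < n, and let N denote the number of independent sets of size k in the cycle graph C_n. Then (n - k) · N = n · binomial(n - k, k). -/
/-- The cycle graph `C n` on `ZMod n`: distinct `i` and `j` are adjacent iff
`j - i = 1` or `j - i = -1`. -/
def Cyc (n : ℕ) : SimpleGraph (ZMod n) :=
  SimpleGraph.fromRel (fun i j => j - i = 1)

open Finset

/-- Independent sets of a path with `m` vertices `0, …, m-1`, of size `j`. -/
def pathSets (m j : ℕ) : Finset (Finset ℕ) :=
  ((Finset.range m).powersetCard j).filter (fun S => ∀ x ∈ S, x + 1 ∉ S)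

lemma mem_pathSets {m j : ℕ} {S : Finset ℕ} :
    S ∈ pathSets m j ↔ (∀ x ∈ S, x < m) ∧ S.card = j ∧ ∀ x ∈ S, x + 1 ∉ S := by
  simp [pathSets, Finset.mem_powersetCard, Finset.subset_iff, and_assoc]

lemma pathSets_zero (m : ℕ) : (pathSets m 0).card = 1 := by
  have : pathSets m 0 = {∅} := by
    ext S
    simp only [mem_pathSets, Finset.card_eq_zero, Finset.mem_singleton]
    constructor
    · rintro ⟨-, h, -⟩; exact h
    · rintro rfl; simp
  simp [this]

lemma pathSets_card : ∀ m j : ℕ, (pathSets m j).card = (m + 1 - j).choose j := by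
  intro m
  induction m using Nat.strong_induction_on with
  | _ m ih =>
    match m with
    | 0 =>
      intro j
      match j with
      | 0 => simpa using pathSets_zero 0
      | (j+1) =>
        have : pathSets 0 (j+1) = ∅ := by
          ext S
          simp only [mem_pathSets, Finset.notMem_empty, iff_false]
          rintro ⟨h1, h2, -⟩
          have hS : S = ∅ :=
            Finset.eq_empty_of_forall_notMem fun x hx => absurd (h1 x hx) (Nat.not_lt_zero x)
          rw [hS] at h2
          simp at h2
        rw [this, Finset.card_empty]
        have h0 : 0 + 1 - (j+1) = 0 := by omega
        rw [h0, Nat.choose_zero_succ]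
    | 1 =>
      intro j
      match j with
      | 0 => simpa using pathSets_zero 1
      | 1 =>
        have : pathSets 1 1 = {{0}} := by
          ext S
          simp only [mem_pathSets, Finset.mem_singleton]
          constructor
          · rintro ⟨h1, h2, _⟩
            rw [Finset.card_eq_one] at h2
            obtain ⟨a, rfl⟩ := h2
            have := h1 a (by simp)
            interval_cases a
            rfl
          · rintro rfl
            refine ⟨by simp, by simp, by simp⟩
        simp [this]
      | (j+2) =>
        have : pathSets 1 (j+2) = ∅ := by
          ext S
          simp only [mem_pathSets, Finset.notMem_empty, iff_false, not_and]
          intro h1 h2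
          exfalso
          have : S ⊆ {0} := by
            intro x hx
            have := h1 x hx
            simp
            omega
          have := Finset.card_le_card this
          simp at this
          omega
        rw [this]
        have h2 : 1 + 1 - (j + 2) = 0 := by omega
        simp [h2]
    | (m+2) =>
      intro j
      match j with
      | 0 => simpa using pathSets_zero (m+2)
      | (j+1) =>
        -- split on membership of m+1
        classical
        have hsplit := Finset.card_filter_add_card_filter_not
          (s := pathSets (m+2) (j+1)) (p := fun S => (m+1) ∈ S)
        -- part without m+1
        have hA : ((pathSets (m+2) (j+1)).filter (fun S => ¬ (m+1) ∈ S))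
            = pathSets (m+1) (j+1) := by
          ext S
          simp only [Finset.mem_filter, mem_pathSets]
          constructor
          · rintro ⟨⟨h1, h2, h3⟩, h4⟩
            refine ⟨fun x hx => ?_, h2, h3⟩
            have := h1 x hx
            have : x ≠ m + 1 := fun h => h4 (h ▸ hx)
            omega
          · rintro ⟨h1, h2, h3⟩
            refine ⟨⟨fun x hx => by have := h1 x hx; omega, h2, h3⟩,
              fun hc => by have := h1 _ hc; omega⟩
        -- part with m+1
        have hB : ((pathSets (m+2) (j+1)).filter (fun S => (m+1) ∈ S)).card
            = (pathSets m j).card := by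
          apply Finset.card_nbij' (fun S => S.erase (m+1)) (fun T => insert (m+1) T)
          <;> simp only [Set.MapsTo, Set.LeftInvOn, Finset.mem_coe]
          · intro S hS
            simp only [Finset.mem_filter, mem_pathSets] at hS
            obtain ⟨⟨h1, h2, h3⟩, h4⟩ := hS
            refine mem_pathSets.mpr ⟨?_, ?_, ?_⟩
            · intro x hx
              rw [Finset.mem_erase] at hx
              obtain ⟨hne, hxS⟩ := hx
              have hlt := h1 x hxS
              have hxm : x ≠ m := fun h => h3 x hxS (by rw [h]; exact h4)
              omega
            · rw [Finset.card_erase_of_mem h4, h2]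
              omega
            · intro x hx
              rw [Finset.mem_erase] at hx ⊢
              refine fun h => h3 x hx.2 h.2
          · intro T hT
            rw [mem_pathSets] at hT
            obtain ⟨h1, h2, h3⟩ := hT
            have hnm : (m+1) ∉ T := fun h => by have := h1 _ h; omega
            simp only [Finset.mem_filter, mem_pathSets]
            refine ⟨⟨?_, ?_, ?_⟩, by simp⟩
            · intro x hx
              rw [Finset.mem_insert] at hx
              rcases hx with rfl | hx
              · omega
              · have := h1 x hx; omega
            · rw [Finset.card_insert_of_notMem hnm, h2]
            · intro x hx
              rw [Finset.mem_insert] at hx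
              rcases hx with rfl | hx
              · simp only [Finset.mem_insert]
                push_neg
                exact ⟨by omega, fun h => by have := h1 _ h; omega⟩
              · simp only [Finset.mem_insert]
                push_neg
                exact ⟨by have := h1 _ hx; omega, h3 x hx⟩
          · intro S hS
            simp only [Finset.mem_filter] at hS
            exact Finset.insert_erase hS.2
          · intro T hT
            rw [mem_pathSets] at hT
            exact Finset.erase_insert (fun h => by have := hT.1 _ h; omega)
        have e1 : (pathSets (m+1) (j+1)).card = (m + 2 - (j+1)).choose (j+1) :=
          ih (m+1) (by omega) (j+1)
        have e2 : (pathSets m j).card = (m + 1 - j).choose j := ih m (by omega) j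
        rw [hA, e1] at hsplit
        rw [hB, e2] at hsplit
        rcases le_or_gt j (m+1) with hle | hlt
        · have h1 : m + 2 + 1 - (j+1) = (m + 1 - j) + 1 := by omega
          have h2 : m + 2 - (j + 1) = m + 1 - j := by omega
          rw [h1, Nat.choose_succ_succ, ← hsplit, h2]
        · have h1 : m + 2 + 1 - (j+1) = 0 := by omega
          have h2 : m + 2 - (j+1) = 0 := by omega
          have h3 : m + 1 - j = 0 := by omega
          rw [h1, ← hsplit, h2, h3]
          have hj : j ≠ 0 := by omega
          obtain ⟨j', rfl⟩ := Nat.exists_eq_succ_of_ne_zero hj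
          simp

/-- The "cyclic" independence condition on a set of naturals, all < n. -/
def cycCond (n : ℕ) (A : Finset ℕ) : Prop :=
  ∀ a ∈ A, ∀ b ∈ A,
    ¬(b = a + 1 ∨ a = b + 1 ∨ (a = 0 ∧ b = n - 1) ∨ (b = 0 ∧ a = n - 1))

instance cycCond.dec (n : ℕ) (A : Finset ℕ) : Decidable (cycCond n A) := by
  unfold cycCond; infer_instance

def cycSets (n k : ℕ) : Finset (Finset ℕ) :=
  ((Finset.range n).powersetCard k).filter (fun A => cycCond n A)

lemma mem_cycSets {n k : ℕ} {A : Finset ℕ} :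
    A ∈ cycSets n k ↔ (∀ x ∈ A, x < n) ∧ A.card = k ∧ cycCond n A := by
  classical
  simp [cycSets, Finset.mem_powersetCard, Finset.subset_iff, and_assoc]

lemma cycSets_card (n k : ℕ) (hn : 3 ≤ n) (hk : 1 ≤ k) :
    (cycSets n k).card = (n - k).choose k + (n - 1 - k).choose (k - 1) := by
  classical
  have hsplit := Finset.card_filter_add_card_filter_not
    (s := cycSets n k) (p := fun A => 0 ∈ A)
  -- part without 0 : shift down by 1 to pathSets (n-1) k
  have hA : ((cycSets n k).filter (fun A => ¬ 0 ∈ A)).card = (pathSets (n-1) k).card := by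
    apply Finset.card_nbij' (fun A => A.image (fun x => x - 1))
      (fun T => T.image (fun x => x + 1))
      <;> simp only [Set.MapsTo, Set.LeftInvOn, Finset.mem_coe]
    · intro A hA
      simp only [Finset.mem_filter, mem_cycSets] at hA
      obtain ⟨⟨h1, h2, h3⟩, h4⟩ := hA
      have hpos : ∀ a ∈ A, 1 ≤ a := by
        intro a ha
        rcases Nat.eq_zero_or_pos a with rfl | h
        · exact absurd ha h4
        · exact h
      refine mem_pathSets.mpr ⟨?_, ?_, ?_⟩
      · intro x hx
        simp only [Finset.mem_image] at hx
        obtain ⟨a, ha, rfl⟩ := hx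
        have := h1 a ha; have := hpos a ha; omega
      · rw [Finset.card_image_of_injOn, h2]
        intro a ha b hb hab
        have := hpos a ha; have := hpos b hb
        simp at hab
        omega
      · intro x hx hx1
        simp only [Finset.mem_image] at hx hx1
        obtain ⟨a, ha, rfl⟩ := hx
        obtain ⟨b, hb, hba⟩ := hx1
        have ha1 := hpos a ha; have hb1 := hpos b hb
        exact h3 a ha b hb (Or.inl (by omega))
    · intro T hT
      rw [mem_pathSets] at hT
      obtain ⟨h1, h2, h3⟩ := hT
      simp only [Finset.mem_filter, mem_cycSets]
      refine ⟨⟨?_, ?_, ?_⟩, ?_⟩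
      · intro x hx
        simp only [Finset.mem_image] at hx
        obtain ⟨t, ht, rfl⟩ := hx
        have := h1 t ht; omega
      · rw [Finset.card_image_of_injOn, h2]
        intro a _ b _ hab; simpa using hab
      · intro a ha b hb
        simp only [Finset.mem_image] at ha hb
        obtain ⟨t, ht, rfl⟩ := ha
        obtain ⟨s, hs, rfl⟩ := hb
        have h1t := h1 t ht; have h1s := h1 s hs
        rintro (h | h | ⟨h, h'⟩ | ⟨h, h'⟩)
        · exact h3 t ht ((show s = t + 1 by omega) ▸ hs)
        · exact h3 s hs ((show t = s + 1 by omega) ▸ ht)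
        · omega
        · omega
      · simp only [Finset.mem_image]
        rintro ⟨t, _, h⟩; omega
    · intro A hA'
      simp only [Finset.mem_filter, mem_cycSets] at hA'
      obtain ⟨⟨h1, h2, h3⟩, h4⟩ := hA'
      rw [Finset.image_image]
      apply Finset.image_congr (g := id) ?_ |>.trans (Finset.image_id)
      intro a ha
      simp only [Function.comp, id]
      rcases Nat.eq_zero_or_pos a with rfl | h
      · exact absurd ha h4
      · omega
    · intro T hT
      rw [mem_pathSets] at hT
      rw [Finset.image_image]
      apply Finset.image_congr (g := id) ?_ |>.trans (Finset.image_id)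
      intro t _
      simp only [Function.comp, id]
      omega
  -- part with 0 : drop 0 and shift down by 2 to pathSets (n-3) (k-1)
  have hB : ((cycSets n k).filter (fun A => 0 ∈ A)).card = (pathSets (n-3) (k-1)).card := by
    apply Finset.card_nbij' (fun A => (A.erase 0).image (fun x => x - 2))
      (fun T => insert 0 (T.image (fun x => x + 2)))
      <;> simp only [Set.MapsTo, Set.LeftInvOn, Finset.mem_coe]
    · intro A hA
      simp only [Finset.mem_filter, mem_cycSets] at hA
      obtain ⟨⟨h1, h2, h3⟩, h4⟩ := hA
      have hrange : ∀ a ∈ A.erase 0, 2 ≤ a ∧ a ≤ n - 2 := by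
        intro a ha
        rw [Finset.mem_erase] at ha
        obtain ⟨hne, haA⟩ := ha
        have hlt := h1 a haA
        have hcc := h3 0 h4 a haA
        push_neg at hcc
        obtain ⟨c1, c2, c3, c4⟩ := hcc
        constructor
        · omega
        · have : a ≠ n - 1 := fun h => c3 rfl h
          omega
      refine mem_pathSets.mpr ⟨?_, ?_, ?_⟩
      · intro x hx
        simp only [Finset.mem_image] at hx
        obtain ⟨a, ha, rfl⟩ := hx
        have := hrange a ha
        omega
      · rw [Finset.card_image_of_injOn, Finset.card_erase_of_mem h4, h2]
        intro a ha b hb hab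
        have := hrange a ha; have := hrange b hb
        simp at hab; omega
      · intro x hx hx1
        simp only [Finset.mem_image] at hx hx1
        obtain ⟨a, ha, rfl⟩ := hx
        obtain ⟨b, hb, hba⟩ := hx1
        have hra := hrange a ha; have hrb := hrange b hb
        rw [Finset.mem_erase] at ha hb
        exact h3 a ha.2 b hb.2 (Or.inl (by omega))
    · intro T hT
      rw [mem_pathSets] at hT
      obtain ⟨h1, h2, h3⟩ := hT
      have h0 : (0:ℕ) ∉ T.image (fun x => x + 2) := by
        simp only [Finset.mem_image]; rintro ⟨t, _, h⟩; omega
      simp only [Finset.mem_filter, mem_cycSets]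
      refine ⟨⟨?_, ?_, ?_⟩, by simp⟩
      · intro x hx
        rw [Finset.mem_insert] at hx
        rcases hx with rfl | hx
        · omega
        · simp only [Finset.mem_image] at hx
          obtain ⟨t, ht, rfl⟩ := hx
          have := h1 t ht; omega
      · rw [Finset.card_insert_of_notMem h0, Finset.card_image_of_injOn, h2]
        · omega
        · intro a _ b _ hab; simpa using hab
      · intro a ha b hb
        rw [Finset.mem_insert] at ha hb
        push_neg
        rcases ha with rfl | ha <;> rcases hb with rfl | hb
        · refine ⟨by omega, by omega, by omega, by omega⟩
        · simp only [Finset.mem_image] at hb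
          obtain ⟨s, hs, rfl⟩ := hb
          have := h1 s hs
          refine ⟨by omega, by omega, by rintro ⟨-, h⟩; omega, by omega⟩
        · simp only [Finset.mem_image] at ha
          obtain ⟨t, ht, rfl⟩ := ha
          have := h1 t ht
          refine ⟨by omega, by omega, by omega, by rintro ⟨-, h⟩; omega⟩
        · simp only [Finset.mem_image] at ha hb
          obtain ⟨t, ht, rfl⟩ := ha
          obtain ⟨s, hs, rfl⟩ := hb
          have h1t := h1 t ht; have h1s := h1 s hs
          refine ⟨fun h => h3 t ht ((show s = t + 1 by omega) ▸ hs),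
            fun h => h3 s hs ((show t = s + 1 by omega) ▸ ht),
            by omega, by omega⟩
    · intro A hA'
      simp only [Finset.mem_filter, mem_cycSets] at hA'
      obtain ⟨⟨h1, h2, h3⟩, h4⟩ := hA'
      have hrange : ∀ a ∈ A.erase 0, 2 ≤ a := by
        intro a ha
        rw [Finset.mem_erase] at ha
        obtain ⟨hne, haA⟩ := ha
        have hcc := h3 0 h4 a haA
        push_neg at hcc
        omega
      rw [Finset.image_image]
      have : Finset.image ((fun x => x + 2) ∘ fun x => x - 2) (A.erase 0) = A.erase 0 := by
        apply Finset.image_congr (g := id) ?_ |>.trans (Finset.image_id)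
        intro a ha
        simp only [Function.comp, id]
        have := hrange a ha
        omega
      rw [this, Finset.insert_erase h4]
    · intro T hT
      rw [mem_pathSets] at hT
      have h0 : (0:ℕ) ∉ T.image (fun x => x + 2) := by
        simp only [Finset.mem_image]; rintro ⟨t, _, h⟩; omega
      rw [Finset.erase_insert h0, Finset.image_image]
      apply Finset.image_congr (g := id) ?_ |>.trans (Finset.image_id)
      intro t _
      simp only [Function.comp, id]
      omega
  rw [hA, hB, pathSets_card, pathSets_card] at hsplit
  have e1 : n - 1 + 1 - k = n - k := by omega
  have e2 : n - 3 + 1 - (k - 1) = n - 1 - k := by omega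
  rw [e1, e2] at hsplit
  omega

lemma zmod_eq_add_one_iff {n : ℕ} (hn : 3 ≤ n) (v w : ZMod n) :
    w = v + 1 ↔ (w.val = v.val + 1 ∨ (v.val = n - 1 ∧ w.val = 0)) := by
  haveI : NeZero n := ⟨by omega⟩
  haveI : Fact (1 < n) := ⟨by omega⟩
  have hval : (v + 1).val = (v.val + 1) % n := by
    rw [ZMod.val_add, ZMod.val_one]
  constructor
  · rintro rfl
    rw [hval]
    have hv := ZMod.val_lt v
    have hw := ZMod.val_lt (v + 1)
    rcases Nat.lt_or_ge (v.val + 1) n with h | h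
    · left; rw [Nat.mod_eq_of_lt h]
    · right
      have : v.val + 1 = n := by omega
      rw [this, Nat.mod_self]
      omega
  · intro h
    apply ZMod.val_injective
    rw [hval]
    have hv := ZMod.val_lt v
    have hw := ZMod.val_lt w
    rcases h with h | ⟨h1, h2⟩
    · rw [Nat.mod_eq_of_lt (by omega), h]
    · rw [h2, h1]
      have : n - 1 + 1 = n := by omega
      rw [this, Nat.mod_self]

lemma cyc_adj_iff {n : ℕ} (hn : 3 ≤ n) (v w : ZMod n) :
    (Cyc n).Adj v w ↔ (w.val = v.val + 1 ∨ v.val = w.val + 1 ∨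
      (v.val = 0 ∧ w.val = n - 1) ∨ (w.val = 0 ∧ v.val = n - 1)) := by
  haveI : NeZero n := ⟨by omega⟩
  rw [Cyc, SimpleGraph.fromRel_adj]
  have h1 : w - v = 1 ↔ w = v + 1 := by
    rw [sub_eq_iff_eq_add, add_comm]
  have h2 : v - w = 1 ↔ v = w + 1 := by
    rw [sub_eq_iff_eq_add, add_comm]
  rw [h1, h2, zmod_eq_add_one_iff hn, zmod_eq_add_one_iff hn]
  have hvw : v ≠ w ↔ v.val ≠ w.val := by
    constructor
    · intro h hc; exact h (ZMod.val_injective n hc)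
    · intro h hc; exact h (hc ▸ rfl)
  rw [hvw]
  constructor
  · rintro ⟨hne, h⟩
    tauto
  · intro h
    have hv := ZMod.val_lt v; have hw := ZMod.val_lt w
    constructor
    · omega
    · tauto

/-- For `n ≥ 3` and `1 ≤ k < n`, the number `N` of independent `k`-sets of the cycle
graph `C n` satisfies `(n - k) · N = n · C(n - k, k)`. -/
theorem stmt_11 (n k : ℕ) (hn : 3 ≤ n) (hk : 1 ≤ k) (hkn : k < n) (N : ℕ)
    (hN : N = {S : Finset (ZMod n) | S.card = k ∧ IsIndep (Cyc n) S}.ncard) :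
    (n - k) * N = n * Nat.choose (n - k) k := by
  classical
  haveI : NeZero n := ⟨by omega⟩
  set P : Finset (ZMod n) → Prop := fun S => S.card = k ∧ IsIndep (Cyc n) S with hP
  have hset : {S : Finset (ZMod n) | P S} =
      ((Finset.univ.filter P : Finset (Finset (ZMod n))) : Set (Finset (ZMod n))) := by
    ext S; simp
  have hNcard : N = (Finset.univ.filter P).card := by
    rw [hN, hset, Set.ncard_coe_finset]
  -- bijection with cycSets n k
  have hbij : (Finset.univ.filter P).card = (cycSets n k).card := by
    apply Finset.card_nbij' (fun S => S.image ZMod.val)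
      (fun A => A.image (Nat.cast : ℕ → ZMod n))
      <;> simp only [Set.MapsTo, Set.LeftInvOn, Finset.mem_coe]
    · intro S hS
      simp only [Finset.mem_filter, hP] at hS
      obtain ⟨-, hcard, hindep⟩ := hS
      refine mem_cycSets.mpr ⟨?_, ?_, ?_⟩
      · intro x hx
        simp only [Finset.mem_image] at hx
        obtain ⟨v, _, rfl⟩ := hx
        exact ZMod.val_lt v
      · rw [Finset.card_image_of_injective _ (ZMod.val_injective n), hcard]
      · intro a ha b hb hcond
        simp only [Finset.mem_image] at ha hb
        obtain ⟨v, hv, rfl⟩ := ha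
        obtain ⟨w, hw, rfl⟩ := hb
        exact hindep v hv w hw ((cyc_adj_iff hn v w).mpr (by tauto))
    · intro A hA
      rw [mem_cycSets] at hA
      obtain ⟨h1, h2, h3⟩ := hA
      simp only [Finset.mem_filter, hP]
      have hinj : Set.InjOn (Nat.cast : ℕ → ZMod n) (A : Set ℕ) := by
        intro a ha b hb hab
        have := ZMod.val_cast_of_lt (h1 a ha)
        have := ZMod.val_cast_of_lt (h1 b hb)
        rw [← ZMod.val_cast_of_lt (h1 a ha), ← ZMod.val_cast_of_lt (h1 b hb), hab]
      refine ⟨Finset.mem_univ _, ?_, ?_⟩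
      · rw [Finset.card_image_of_injOn hinj, h2]
      · intro v hv w hw hadj
        simp only [Finset.mem_image] at hv hw
        obtain ⟨a, ha, rfl⟩ := hv
        obtain ⟨b, hb, rfl⟩ := hw
        rw [cyc_adj_iff hn] at hadj
        rw [ZMod.val_cast_of_lt (h1 a ha), ZMod.val_cast_of_lt (h1 b hb)] at hadj
        exact h3 a ha b hb (by tauto)
    · intro S _
      rw [Finset.image_image]
      apply Finset.image_congr (g := id) ?_ |>.trans (Finset.image_id)
      intro v _
      exact ZMod.natCast_rightInverse v
    · intro A hA
      rw [mem_cycSets] at hA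
      rw [Finset.image_image]
      apply Finset.image_congr (g := id) ?_ |>.trans (Finset.image_id)
      intro a ha
      exact ZMod.val_cast_of_lt (hA.1 a ha)
  have hNval : N = (n - k).choose k + (n - 1 - k).choose (k - 1) := by
    rw [hNcard, hbij, cycSets_card n k hn hk]
  -- final arithmetic
  obtain ⟨m, hm⟩ : ∃ m, n - k = m + 1 := ⟨n - k - 1, by omega⟩
  obtain ⟨k', hk'⟩ : ∃ k', k = k' + 1 := ⟨k - 1, by omega⟩
  have key : (n - k) * (n - 1 - k).choose (k - 1) = k * (n - k).choose k := by
    have h1 : n - 1 - k = m := by omega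
    have h2 : k - 1 = k' := by omega
    rw [hm, h1, h2, hk']
    have hs := Nat.add_one_mul_choose_eq m k'
    rw [hs]
    ring
  have hnk : n - k + k = n := by omega
  rw [hNval]
  rw [Nat.mul_add, key, ← Nat.add_mul, hnk]
end

section
/- Let n ≥ 2 and let G_n = K_n □ K_2 be the prism over the complete graph. The induced 2-independent graph H_2(G_n) is regular of degree n² - 3n + 3; that is, each independent 2-set of G_n is disjoint from exactly n² - 3n + 3 other independent 2-sets. -/
/-- The prism `G_n = K_n □ K_2` over the complete graph, on `Fin n × Bool`:
`(i,b)` is adjacent to `(j,c)` iff (`b = c` and `i ≠ j`) or (`i = j` and `b ≠ c`). -/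
def Prism (n : ℕ) : SimpleGraph (Fin n × Bool) :=
  SimpleGraph.fromRel (fun v w =>
    (v.2 = w.2 ∧ v.1 ≠ w.1) ∨ (v.1 = w.1 ∧ v.2 ≠ w.2))

lemma indep2_iff {n : ℕ} (S : Finset (Fin n × Bool)) :
    (S.card = 2 ∧ IsIndep (Prism n) S) ↔
    ∃ i j : Fin n, i ≠ j ∧ S = {(i, true), (j, false)} := by
  constructor
  · rintro ⟨hc, hI⟩
    obtain ⟨a, b, hab, rfl⟩ := Finset.card_eq_two.mp hc
    obtain ⟨a1, a2⟩ := a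
    obtain ⟨b1, b2⟩ := b
    have hadj := hI (a1, a2) (by simp) (b1, b2) (by simp)
    simp only [Prism, SimpleGraph.fromRel_adj] at hadj
    have hf : a1 ≠ b1 := by
      rintro rfl
      have h2 : a2 ≠ b2 := by simpa using hab
      exact hadj ⟨hab, Or.inl (Or.inr ⟨rfl, h2⟩)⟩
    have hs : a2 ≠ b2 := by
      rintro rfl
      have h1 : a1 ≠ b1 := by simpa using hab
      exact hadj ⟨hab, Or.inl (Or.inl ⟨rfl, h1⟩)⟩
    cases a2 <;> cases b2
    · exact absurd rfl hs
    · exact ⟨b1, a1, fun h => hf h.symm, Finset.pair_comm _ _⟩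
    · exact ⟨a1, b1, hf, rfl⟩
    · exact absurd rfl hs
  · rintro ⟨i, j, hij, rfl⟩
    refine ⟨?_, ?_⟩
    · rw [Finset.card_insert_of_notMem (by simp), Finset.card_singleton]
    · intro x hx y hy
      simp only [Finset.mem_insert, Finset.mem_singleton] at hx hy
      simp only [Prism, SimpleGraph.fromRel_adj, not_and, not_or]
      rcases hx with rfl | rfl <;> rcases hy with rfl | rfl <;> simp_all <;> exact fun h => hij h.symm

lemma card_pairs {n : ℕ} (i j : Fin n) (hij : i ≠ j) :
    Nat.card {p : Fin n × Fin n // p.1 ≠ i ∧ p.2 ≠ j ∧ p.1 ≠ p.2} =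
      (n - 1) * (n - 1) - (n - 2) := by
  rw [Nat.card_eq_fintype_card, Fintype.card_subtype]
  have hset : (Finset.univ.filter fun p : Fin n × Fin n => p.1 ≠ i ∧ p.2 ≠ j ∧ p.1 ≠ p.2)
      = ((Finset.univ.erase i) ×ˢ (Finset.univ.erase j)).filter fun p => p.1 ≠ p.2 := by
    ext ⟨a, b⟩
    simp [Finset.mem_product, and_assoc]
  rw [hset]
  have hdiag : ((Finset.univ.erase i) ×ˢ (Finset.univ.erase j)).filter (fun p => p.1 = p.2)
      = ((Finset.univ.erase i).erase j).image (fun k => (k, k)) := by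
    ext ⟨a, b⟩
    simp [Finset.mem_product, Prod.ext_iff]
    aesop
  have hadd := Finset.card_filter_add_card_filter_not
    (s := (Finset.univ.erase i) ×ˢ (Finset.univ.erase j)) (p := fun p => p.1 = p.2)
  have hprodcard : ((Finset.univ.erase i) ×ˢ (Finset.univ.erase j)).card = (n-1) * (n-1) := by
    rw [Finset.card_product, Finset.card_erase_of_mem (Finset.mem_univ _),
      Finset.card_erase_of_mem (Finset.mem_univ _)]
    simp
  have hdiagcard : (((Finset.univ.erase i) ×ˢ (Finset.univ.erase j)).filter
      (fun p => p.1 = p.2)).card = n - 2 := by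
    rw [hdiag, Finset.card_image_of_injective _ (fun a b h => (Prod.ext_iff.mp h).1),
      Finset.card_erase_of_mem (Finset.mem_erase.mpr ⟨hij.symm, Finset.mem_univ _⟩),
      Finset.card_erase_of_mem (Finset.mem_univ _)]
    simp
    omega
  have : (((Finset.univ.erase i) ×ˢ (Finset.univ.erase j)).filter
      (fun p => ¬ p.1 = p.2)).card = (n-1)*(n-1) - (n-2) := by omega
  convert this using 2

/-- For `n ≥ 2`, the induced 2-independent graph `H_2(G_n)` of the prism is regular
of degree `n² - 3n + 3`: each independent 2-set is disjoint from exactly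
`n² - 3n + 3` other independent 2-sets.  (Stated over `ℤ` to avoid truncated
natural subtraction.) -/
theorem stmt_14 (n : ℕ) (hn : 2 ≤ n)
    (v : {S : Finset (Fin n × Bool) // S.card = 2 ∧ IsIndep (Prism n) S}) :
    (((Hk (Prism n) 2).neighborSet v).ncard : ℤ) = n ^ 2 - 3 * n + 3 := by
  obtain ⟨i, j, hij, hv⟩ := (indep2_iff v.1).mp v.2
  have key : ∀ w, (Hk (Prism n) 2).Adj v w ↔ Disjoint v.1 w.1 := by
    intro w
    simp only [Hk, SimpleGraph.fromRel_adj]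
    constructor
    · rintro ⟨_, h | h⟩
      · exact h
      · exact h.symm
    · intro h
      refine ⟨?_, Or.inl h⟩
      rintro rfl
      have h0 := disjoint_self.mp h
      have := v.2.1
      rw [h0] at this
      simp at this
  have hinj2 : ∀ (k l k' l' : Fin n),
      ({((k : Fin n), true), (l, false)} : Finset (Fin n × Bool)) = {(k', true), (l', false)} →
      k = k' ∧ l = l' := by
    intro k l k' l' h
    constructor
    · have : ((k : Fin n), true) ∈ ({(k', true), (l', false)} : Finset (Fin n × Bool)) := by
        rw [← h]; simp
      simpa [Prod.ext_iff] using this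
    · have : ((l : Fin n), false) ∈ ({(k', true), (l', false)} : Finset (Fin n × Bool)) := by
        rw [← h]; simp
      simpa [Prod.ext_iff] using this
  have hdisj : ∀ k l : Fin n, k ≠ i → l ≠ j →
      Disjoint v.1 ({(k, true), (l, false)} : Finset (Fin n × Bool)) := by
    intro k l hk hl
    rw [hv, Finset.disjoint_left]
    intro a ha hb
    simp only [Finset.mem_insert, Finset.mem_singleton] at ha hb
    rcases ha with rfl | rfl <;> rcases hb with h | h
    · exact hk (congrArg Prod.fst h).symm
    · exact Bool.noConfusion (congrArg Prod.snd h)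
    · exact Bool.noConfusion (congrArg Prod.snd h)
    · exact hl (congrArg Prod.fst h).symm
  set P : Fin n × Fin n → Prop := fun p => p.1 ≠ i ∧ p.2 ≠ j ∧ p.1 ≠ p.2 with hP
  have hmk : ∀ p : {p : Fin n × Fin n // P p},
      ({(p.1.1, true), (p.1.2, false)} : Finset (Fin n × Bool)).card = 2 ∧
      IsIndep (Prism n) {(p.1.1, true), (p.1.2, false)} :=
    fun p => (indep2_iff _).mpr ⟨p.1.1, p.1.2, p.2.2.2, rfl⟩
  let f : {p : Fin n × Fin n // P p} → ((Hk (Prism n) 2).neighborSet v) :=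
    fun p => ⟨⟨{(p.1.1, true), (p.1.2, false)}, hmk p⟩,
      (key _).mpr (hdisj _ _ p.2.1 p.2.2.1)⟩
  have hbij : Function.Bijective f := by
    constructor
    · rintro ⟨⟨k, l⟩, hp⟩ ⟨⟨k', l'⟩, hq⟩ hfeq
      have h1 : ({((k : Fin n), true), (l, false)} : Finset (Fin n × Bool))
          = {(k', true), (l', false)} := by
        have := congrArg (fun x => x.1.1) hfeq
        simpa [f] using this
      obtain ⟨rfl, rfl⟩ := hinj2 _ _ _ _ h1
      rfl
    · rintro ⟨w, hw⟩
      have hdisjw : Disjoint v.1 w.1 := (key w).mp hw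
      obtain ⟨k, l, hkl, hwval⟩ := (indep2_iff w.1).mp w.2
      have hkmem : ((k : Fin n), true) ∈ w.1 := by rw [hwval]; simp
      have hlmem : ((l : Fin n), false) ∈ w.1 := by rw [hwval]; simp
      have hki : k ≠ i := by
        rintro rfl
        exact (Finset.disjoint_left.mp hdisjw (by rw [hv]; simp)) hkmem
      have hlj : l ≠ j := by
        rintro rfl
        exact (Finset.disjoint_left.mp hdisjw (by rw [hv]; simp)) hlmem
      refine ⟨⟨(k, l), hki, hlj, hkl⟩, ?_⟩
      apply Subtype.ext
      apply Subtype.ext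
      exact hwval.symm
  have hcard : ((Hk (Prism n) 2).neighborSet v).ncard = (n - 1) * (n - 1) - (n - 2) := by
    rw [← Nat.card_coe_set_eq, Nat.card_congr (Equiv.ofBijective f hbij).symm,
      card_pairs i j hij]
  rw [hcard]
  have hle : n - 2 ≤ (n - 1) * (n - 1) :=
    le_trans (by omega) (Nat.le_mul_of_pos_left _ (by omega))
  rw [Nat.cast_sub hle, Nat.cast_mul, Nat.cast_sub (by omega : 1 ≤ n),
    Nat.cast_sub (by omega : 2 ≤ n), Nat.cast_one, Nat.cast_ofNat]
  ring
end

section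
/- Let n ≥ 3 and let G_n = K_n □ K_2 be the prism over the complete graph, with vertices indexed by ZMod n × Bool. For i ∈ ZMod n let p_i = {(i, true), (i + 1, false)}, an independent 2-set of G_n and hence a vertex of H_2(G_n). Then: (a) for every proper subset I ⊊ ZMod n there exists a vertex of H_2(G_n) adjacent to p_i for every i ∈ I; and (b) no vertex of H_2(G_n) is adjacent to p_i for every i ∈ ZMod n. -/
/-- The prism `G_n = K_n □ K_2` over the complete graph, with vertices indexed by
`ZMod n × Bool`: `(i,b)` is adjacent to `(j,c)` iff (`b = c` and `i ≠ j`) or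
(`i = j` and `b ≠ c`). -/
def PrismZ (n : ℕ) : SimpleGraph (ZMod n × Bool) :=
  SimpleGraph.fromRel (fun v w =>
    (v.2 = w.2 ∧ v.1 ≠ w.1) ∨ (v.1 = w.1 ∧ v.2 ≠ w.2))

/-- For `n ≥ 3`, let `p i = {(i, true), (i+1, false)}`, a vertex of `H_2(G_n)`.  Then:
(a) for every proper subset `I ⊊ ZMod n` there is a vertex of `H_2(G_n)` adjacent to
`p i` for all `i ∈ I`; (b) no vertex of `H_2(G_n)` is adjacent to every `p i`. -/
theorem stmt_15 (n : ℕ) (hn : 3 ≤ n)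
    (p : ZMod n → {S : Finset (ZMod n × Bool) // S.card = 2 ∧ IsIndep (PrismZ n) S})
    (hp : ∀ i : ZMod n, (p i).1 = {(i, true), (i + 1, false)}) :
    (∀ I : Set (ZMod n), I ≠ Set.univ →
      ∃ w, ∀ i ∈ I, (Hk (PrismZ n) 2).Adj w (p i)) ∧
    ¬ ∃ w, ∀ i : ZMod n, (Hk (PrismZ n) 2).Adj w (p i) := by
  constructor
  · intro I hI
    obtain ⟨j, hj⟩ : ∃ j, j ∉ I := by
      by_contra h; push_neg at h; exact hI (Set.eq_univ_of_forall h)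
    refine ⟨p j, fun i hi => ?_⟩
    have hij : j ≠ i := fun h => hj (h ▸ hi)
    rw [Hk, SimpleGraph.fromRel_adj]
    refine ⟨?_, Or.inl ?_⟩
    · intro h
      apply hij
      have h1 := congrArg (fun S => S.1) h
      simp only [hp] at h1
      have : (j, true) ∈ ({(i, true), (i + 1, false)} : Finset (ZMod n × Bool)) := by
        rw [← h1]; simp
      simp only [Finset.mem_insert, Finset.mem_singleton, Prod.mk.injEq] at this
      rcases this with ⟨h2, _⟩ | ⟨_, h3⟩
      · exact h2
      · simp at h3
    · rw [hp j, hp i]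
      rw [Finset.disjoint_left]
      intro a ha ha'
      simp only [Finset.mem_insert, Finset.mem_singleton] at ha ha'
      rcases ha with rfl | rfl <;> rcases ha' with h | h <;>
        simp_all [Prod.ext_iff, add_right_cancel_iff]
  · rintro ⟨w, hw⟩
    have hdisj : ∀ i, Disjoint w.1 (p i).1 := fun i => by
      have h := hw i
      rw [Hk, SimpleGraph.fromRel_adj] at h
      rcases h.2 with h | h
      · exact h
      · exact h.symm
    have hempty : w.1 = ∅ := by
      ext ⟨x, b⟩
      simp only [Finset.notMem_empty, iff_false]
      intro hx
      cases b
      · have h := hdisj (x - 1)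
        rw [hp] at h
        have h2 := Finset.disjoint_left.mp h hx
        apply h2
        simp
      · have h := hdisj x
        rw [hp] at h
        have h2 := Finset.disjoint_left.mp h hx
        apply h2
        simp
    have hc := w.2.1
    rw [hempty] at hc
    simp at hc
end
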